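/- arXiv:1508.03774 — 2 statements merged into one kernel-verified Lean document; each statement's English description precedes it below -/
import Mathlib

section
/- Let T ∈ UB(n) with n ≥ 4 leaves and c cherries. Then p_1(T) = n − 3, p_2(T) = n + c − 6, and for every k ≥ 3, p_k(T) = 4·p_{k−2}(T) − h_k(T) − m_k(T), where m_k(T) is the number of paths of length k in T whose two endpoints are both leaves, and h_k(T) is the number of paths of length k in T exactly one of whose endpoints is a leaf. -/
open SimpleGraph

noncomputable section

namespace Phylo

/-- Vertex type for (representatives of) unrooted binary phylogenetic trees with `n` leaves:
`n` leaf vertices (labelled by `Fin n`) and `n - 2` internal vertices. -/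
abbrev V (n : ℕ) := Fin n ⊕ Fin (n - 2)

def isLeafV {n : ℕ} (v : V n) : Prop := ∃ i : Fin n, v = Sum.inl i

def isInternalV {n : ℕ} (v : V n) : Prop := ∃ j : Fin (n - 2), v = Sum.inr j

/-- `G` is a representative of a tree in `UB(n)`: a tree in which every leaf-labelled vertex
has degree one and every internal vertex has degree three.  Trees in `UB(n)` are identified
up to leaf-label-preserving isomorphism; every such tree has a representative on this fixed
vertex set, and two representatives are isomorphic iff they have the same set of splits. -/
def ubGraph (n : ℕ) (G : SimpleGraph (V n)) : Prop :=
  G.Connected ∧ G.IsAcyclic ∧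
    (∀ i : Fin n, (G.neighborSet (Sum.inl i)).ncard = 1) ∧
    (∀ j : Fin (n - 2), (G.neighborSet (Sum.inr j)).ncard = 3)

/-- The split (bipartition of the leaf label set) associated with the edge `e` of a tree
whose leaves are labelled by `lab` : the set consisting of the two leaf-label sets of the
two components of `G` minus `e`. -/
def splitOfL {α : Type} {n : ℕ} (G : SimpleGraph α) (lab : Fin n → α) (e : Sym2 α) :
    Set (Set (Fin n)) :=
  { L | ∃ v, v ∈ e ∧ L = { i | (G.deleteEdges {e}).Reachable (lab i) v } }

/-- The set of non-trivial splits of a labelled tree (splits associated with edges none of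
whose endpoints is a leaf). -/
def splitsL {α : Type} {n : ℕ} (G : SimpleGraph α) (lab : Fin n → α) :
    Set (Set (Set (Fin n))) :=
  { s | ∃ e ∈ G.edgeSet, (∀ v ∈ e, ¬ ∃ i, lab i = v) ∧ s = splitOfL G lab e }

def splitOf {n : ℕ} (G : SimpleGraph (V n)) (e : Sym2 (V n)) : Set (Set (Fin n)) :=
  splitOfL G Sum.inl e

/-- `Σ(T)`, the set of non-trivial splits. -/
def splits {n : ℕ} (G : SimpleGraph (V n)) : Set (Set (Set (Fin n))) :=
  splitsL G Sum.inl

def internalEdge {n : ℕ} (G : SimpleGraph (V n)) (e : Sym2 (V n)) : Prop :=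
  e ∈ G.edgeSet ∧ ∀ v ∈ e, isInternalV v

/-- Two edges are adjacent (share an endpoint). -/
def edgesShare {α : Type} (e f : Sym2 α) : Prop := ∃ v, v ∈ e ∧ v ∈ f

/-- Robinson–Foulds distance. -/
def rfDist {n : ℕ} (G₁ G₂ : SimpleGraph (V n)) : ℕ :=
  ((splits G₁ \ splits G₂).ncard + (splits G₂ \ splits G₁).ncard) / 2

/-- `|N^k_RF(T)|`: the number of trees in `UB(n)` (counted up to leaf-label-preserving
isomorphism, i.e. by their split sets) at RF distance exactly `k` from `G`. -/
def rfNbhdCard (n k : ℕ) (G : SimpleGraph (V n)) : ℕ :=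
  ({ s : Set (Set (Set (Fin n))) |
      ∃ G' : SimpleGraph (V n), ubGraph n G' ∧ rfDist G G' = k ∧ s = splits G' }).ncard

/-- NNI move across the internal edge `{x, y}`, swapping the subtree rooted at `z₁`
(adjacent to `x`) with the subtree rooted at `z₃` (adjacent to `y`). -/
def nniMoveData {n : ℕ} (G : SimpleGraph (V n)) (x y z₁ z₃ : V n)
    (G' : SimpleGraph (V n)) : Prop :=
  isInternalV x ∧ isInternalV y ∧ G.Adj x y ∧ G.Adj x z₁ ∧ G.Adj y z₃ ∧
    z₁ ≠ y ∧ z₃ ≠ x ∧ z₁ ≠ z₃ ∧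
    G' = fromEdgeSet ((G.edgeSet \ {s(x, z₁), s(y, z₃)}) ∪ {s(x, z₃), s(y, z₁)})

def nniMove {n : ℕ} (G G' : SimpleGraph (V n)) : Prop :=
  ∃ x y z₁ z₃, nniMoveData G x y z₁ z₃ G'

def nniStepRel {n : ℕ} (G H : SimpleGraph (V n)) : Prop := nniMove G H ∨ nniMove H G

/-- There is a chain of `k` single moves (each between trees in `UB(n)`) from `G` to
(a representative of) the tree `G'`. -/
def chainRel {n : ℕ} (step : SimpleGraph (V n) → SimpleGraph (V n) → Prop)
    (G : SimpleGraph (V n)) (k : ℕ) (G' : SimpleGraph (V n)) : Prop :=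
  ∃ f : ℕ → SimpleGraph (V n), f 0 = G ∧ splits (f k) = splits G' ∧
    (∀ i, i ≤ k → ubGraph n (f i)) ∧ ∀ i, i < k → step (f i) (f (i + 1))

def nniDist {n : ℕ} (G G' : SimpleGraph (V n)) : ℕ :=
  sInf { k | chainRel nniStepRel G k G' }

/-- `|N^k_NNI(T)|`. -/
def nniNbhdCard (n k : ℕ) (G : SimpleGraph (V n)) : ℕ :=
  ({ s : Set (Set (Set (Fin n))) |
      ∃ G' : SimpleGraph (V n), ubGraph n G' ∧ nniDist G G' = k ∧ s = splits G' }).ncard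

/-- SPR move with cut edge `c = {u,v}` (pruning the subtree containing `u`) and join edge
`j` (an edge of the component containing `v`); `a`, `b` are the other two neighbours of `v`;
the degree-two vertex `v` is suppressed and re-used to subdivide `j`.  If `j` is incident to
`v` the operation regrafts the subtree where it was, yielding the original tree. -/
def sprMoveOn {n : ℕ} (G : SimpleGraph (V n)) (c j : Sym2 (V n))
    (G' : SimpleGraph (V n)) : Prop :=
  ∃ u v a b : V n, c = s(u, v) ∧ G.Adj u v ∧ G.Adj v a ∧ G.Adj v b ∧
    a ≠ b ∧ a ≠ u ∧ b ≠ u ∧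
    j ∈ G.edgeSet ∧ j ≠ c ∧ (∀ w ∈ j, (G.deleteEdges {c}).Reachable v w) ∧
    ((∃ p q : V n, j = s(p, q) ∧ p ≠ v ∧ q ≠ v ∧
        G' = fromEdgeSet
          ((G.edgeSet \ {s(v, a), s(v, b), j}) ∪ {s(a, b), s(v, p), s(v, q)})) ∨
      (v ∈ j ∧ G' = G))

def sprMove {n : ℕ} (G G' : SimpleGraph (V n)) : Prop := ∃ c j, sprMoveOn G c j G'

def sprStepRel {n : ℕ} (G H : SimpleGraph (V n)) : Prop := sprMove G H ∨ sprMove H G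

def sprDist {n : ℕ} (G G' : SimpleGraph (V n)) : ℕ :=
  sInf { k | chainRel sprStepRel G k G' }

/-- `|N^k_SPR(T)|`. -/
def sprNbhdCard (n k : ℕ) (G : SimpleGraph (V n)) : ℕ :=
  ({ s : Set (Set (Set (Fin n))) |
      ∃ G' : SimpleGraph (V n), ubGraph n G' ∧ sprDist G G' = k ∧ s = splits G' }).ncard

/-- `v` is the root of a cherry: it is adjacent to two distinct leaves. -/
def cherryRoot {n : ℕ} (G : SimpleGraph (V n)) (v : V n) : Prop :=
  ∃ i j : Fin n, i ≠ j ∧ G.Adj (Sum.inl i) v ∧ G.Adj (Sum.inl j) v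

/-- Cherries, as unordered pairs of leaf labels with a common neighbour. -/
def cherrySet {n : ℕ} (G : SimpleGraph (V n)) : Set (Sym2 (Fin n)) :=
  { c | ∃ i j : Fin n, ∃ v : V n, i ≠ j ∧ c = s(i, j) ∧
      G.Adj (Sum.inl i) v ∧ G.Adj (Sum.inl j) v }

def cherryCount {n : ℕ} (G : SimpleGraph (V n)) : ℕ := (cherrySet G).ncard

/-- `P_k(T)`: the number of distinct (undirected) paths of length `k` in `G`, counted by
their edge sets. -/
def pathCount {n : ℕ} (G : SimpleGraph (V n)) (k : ℕ) : ℕ :=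
  ({ E : Set (Sym2 (V n)) | ∃ (u v : V n) (w : G.Walk u v),
      w.IsPath ∧ w.length = k ∧ E = { e | e ∈ w.edges } }).ncard

/-- `p_k(T)`: the number of internal paths of length `k` (all vertices internal). -/
def internalPathCount {n : ℕ} (G : SimpleGraph (V n)) (k : ℕ) : ℕ :=
  ({ E : Set (Sym2 (V n)) | ∃ (u v : V n) (w : G.Walk u v),
      w.IsPath ∧ w.length = k ∧ (∀ x ∈ w.support, isInternalV x) ∧
      E = { e | e ∈ w.edges } }).ncard

/-- `m_k(T)`: the number of paths of length `k` both of whose endpoints are leaves. -/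
def leafLeafPathCount {n : ℕ} (G : SimpleGraph (V n)) (k : ℕ) : ℕ :=
  ({ E : Set (Sym2 (V n)) | ∃ (u v : V n) (w : G.Walk u v),
      w.IsPath ∧ w.length = k ∧ isLeafV u ∧ isLeafV v ∧
      E = { e | e ∈ w.edges } }).ncard

/-- `h_k(T)`: the number of paths of length `k` exactly one of whose endpoints is a leaf. -/
def oneLeafPathCount {n : ℕ} (G : SimpleGraph (V n)) (k : ℕ) : ℕ :=
  ({ E : Set (Sym2 (V n)) | ∃ (u v : V n) (w : G.Walk u v),
      w.IsPath ∧ w.length = k ∧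
      ((isLeafV u ∧ ¬ isLeafV v) ∨ (¬ isLeafV u ∧ isLeafV v)) ∧
      E = { e | e ∈ w.edges } }).ncard

def isPathGraph {α : Type} (H : SimpleGraph α) : Prop :=
  H.Connected ∧ H.IsAcyclic ∧ ∀ v, (H.neighborSet v).ncard ≤ 2

/-- A caterpillar: the subgraph induced by the internal vertices is a path. -/
def isCaterpillar {n : ℕ} (G : SimpleGraph (V n)) : Prop :=
  isPathGraph (G.induce { v | isInternalV v })

/-- A balanced tree: all leaves are equidistant from a single vertex or a single edge. -/
def isBalanced {n : ℕ} (G : SimpleGraph (V n)) : Prop :=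
  (∃ (x : V n) (d : ℕ), ∀ i : Fin n, G.dist (Sum.inl i) x = d) ∨
  (∃ x y : V n, G.Adj x y ∧ ∃ d : ℕ,
    ∀ i : Fin n, min (G.dist (Sum.inl i) x) (G.dist (Sum.inl i) y) = d)

def leafNeighborCount {n : ℕ} (G : SimpleGraph (V n)) (v : V n) : ℕ :=
  ({ i : Fin n | G.Adj (Sum.inl i) v }).ncard

/-- A Type I tree with three cherries: the roots `a`, `b` of two cherries are adjacent to a
common internal vertex `x` (which is adjacent to no leaf), and every internal vertex other
than the three cherry roots and `x` is adjacent to exactly one leaf (so the remaining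
internal vertices lie on the path from `x` to the third cherry root `d`). -/
def typeI {n : ℕ} (G : SimpleGraph (V n)) : Prop :=
  cherryCount G = 3 ∧
  ∃ a b d x : V n, a ≠ b ∧ a ≠ d ∧ b ≠ d ∧
    cherryRoot G a ∧ cherryRoot G b ∧ cherryRoot G d ∧
    G.Adj x a ∧ G.Adj x b ∧ leafNeighborCount G x = 0 ∧
    ∀ w : V n, isInternalV w → w ≠ a → w ≠ b → w ≠ d → w ≠ x →
      leafNeighborCount G w = 1

/-- A Type II tree with `n = 3m` leaves and three cherries: a central internal vertex `c`
adjacent to no leaf, with the three cherry roots `a`, `b`, `d` each at distance `m - 1`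
from `c`, and every other internal vertex adjacent to exactly one leaf; equivalently, `c`
is adjacent to the roots of three pendant caterpillar subtrees each with `m` leaves. -/
def typeII {n : ℕ} (m : ℕ) (G : SimpleGraph (V n)) : Prop :=
  cherryCount G = 3 ∧
  ∃ a b d c : V n, a ≠ b ∧ a ≠ d ∧ b ≠ d ∧ c ≠ a ∧ c ≠ b ∧ c ≠ d ∧
    cherryRoot G a ∧ cherryRoot G b ∧ cherryRoot G d ∧
    leafNeighborCount G c = 0 ∧
    G.dist c a = m - 1 ∧ G.dist c b = m - 1 ∧ G.dist c d = m - 1 ∧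
    ∀ w : V n, isInternalV w → w ≠ a → w ≠ b → w ≠ d → w ≠ c →
      leafNeighborCount G w = 1

/-- `|UB(n,c)|`: the number of trees in `UB(n)` with exactly `c` cherries, counted up to
leaf-label-preserving isomorphism (by split sets). -/
def UBcount (n c : ℕ) : ℕ :=
  ({ s : Set (Set (Set (Fin n))) |
      ∃ G : SimpleGraph (V n), ubGraph n G ∧ cherryCount G = c ∧ s = splits G }).ncard

/-- `|UB(n)|`. -/
def UBtotal (n : ℕ) : ℕ :=
  ({ s : Set (Set (Set (Fin n))) |
      ∃ G : SimpleGraph (V n), ubGraph n G ∧ s = splits G }).ncard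

/-- The number of unordered pairs of distinct trees in `UB(n)` at NNI distance at most `k`. -/
def nniClosePairs (n k : ℕ) : ℕ :=
  ({ p : Sym2 (Set (Set (Set (Fin n)))) |
      ∃ G G' : SimpleGraph (V n), ubGraph n G ∧ ubGraph n G' ∧
        splits G ≠ splits G' ∧ nniDist G G' ≤ k ∧
        p = s(splits G, splits G') }).ncard

/-- The number of unordered pairs of distinct trees in `UB(n)` at RF distance at most `k`. -/
def rfClosePairs (n k : ℕ) : ℕ :=
  ({ p : Sym2 (Set (Set (Set (Fin n)))) |
      ∃ G G' : SimpleGraph (V n), ubGraph n G ∧ ubGraph n G' ∧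
        splits G ≠ splits G' ∧ rfDist G G' ≤ k ∧
        p = s(splits G, splits G') }).ncard

/-- `Δ(T, Σ_k)`: the number of trees in `UB(n)` containing all splits of `G` except
possibly those in `Sk`. -/
def Delta {n : ℕ} (G : SimpleGraph (V n)) (Sk : Set (Set (Set (Fin n)))) : ℕ :=
  ({ s : Set (Set (Set (Fin n))) | ∃ G' : SimpleGraph (V n),
      ubGraph n G' ∧ splits G \ Sk ⊆ splits G' ∧ s = splits G' }).ncard

/-- `Δ°(T, Σ_k)`: the number of trees in `UB(n)` containing the splits `Σ(T) \ Sk`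
and no other split of `G`. -/
def DeltaCirc {n : ℕ} (G : SimpleGraph (V n)) (Sk : Set (Set (Set (Fin n)))) : ℕ :=
  ({ s : Set (Set (Set (Fin n))) | ∃ G' : SimpleGraph (V n),
      ubGraph n G' ∧ splits G ∩ splits G' = splits G \ Sk ∧ s = splits G' }).ncard

/-- Isomorphism of the subgraphs formed by two edge sets. -/
def edgeSetIso {α β : Type} (E : Set (Sym2 α)) (E' : Set (Sym2 β)) : Prop :=
  ∃ φ : α → β, Set.InjOn φ { v | ∃ e ∈ E, v ∈ e } ∧
    (∀ x y : α, s(x, y) ∈ E → s(φ x, φ y) ∈ E') ∧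
    (∀ e' ∈ E', ∃ x y : α, s(x, y) ∈ E ∧ e' = s(φ x, φ y))

/-- The number of edges of `E` lying in the connected component `C` of the graph formed
by the edge set `E`. -/
def componentEdgeCount {α : Type} (E : Set (Sym2 α))
    (C : (fromEdgeSet E).ConnectedComponent) : ℕ :=
  ({ e ∈ E | ∃ v ∈ e, (fromEdgeSet E).connectedComponentMk v = C }).ncard

/-- `c_m`: the number of connected components with exactly `m` edges of the subgraph
formed by the edge set `E`. -/
def componentsWithEdges {α : Type} (E : Set (Sym2 α)) (m : ℕ) : ℕ :=
  ({ C : (fromEdgeSet E).ConnectedComponent | componentEdgeCount E C = m } :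
    Set ((fromEdgeSet E).ConnectedComponent)).ncard

/-- Sets of `k` distinct, pairwise non-adjacent internal edges of `G`. -/
def Aset (n k : ℕ) (G : SimpleGraph (V n)) : Set (Finset (Sym2 (V n))) :=
  { s | s.card = k ∧ (∀ e ∈ s, internalEdge G e) ∧
      ∀ e ∈ s, ∀ f ∈ s, e ≠ f → ¬ edgesShare e f }

/-- Sets of `k` distinct internal edges of `G` in which exactly one pair is adjacent. -/
def Bset (n k : ℕ) (G : SimpleGraph (V n)) : Set (Finset (Sym2 (V n))) :=
  { s | s.card = k ∧ (∀ e ∈ s, internalEdge G e) ∧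
      ∃ e ∈ s, ∃ f ∈ s, e ≠ f ∧ edgesShare e f ∧
        ∀ e' ∈ s, ∀ f' ∈ s, e' ≠ f' → edgesShare e' f' →
          (e' = e ∧ f' = f) ∨ (e' = f ∧ f' = e) }

/-- The label-preserving correspondence of edges under the NNI move swapping `z₁` and `z₃`
across `{x,y}`: the edge incident to the moved subtree keeps its label. -/
def nniRelabel {n : ℕ} (x y z₁ z₃ : V n) (f : Sym2 (V n)) : Sym2 (V n) :=
  if f = s(x, z₁) then s(y, z₁) else if f = s(y, z₃) then s(x, z₃) else f

/-- `NNI(T; e₁, …, e_k)`: the set of trees obtained by successive NNI operations on the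
listed edges (edge labels being carried along through each operation). -/
def nniSeq {n : ℕ} : SimpleGraph (V n) → List (Sym2 (V n)) → Set (SimpleGraph (V n))
  | G, [] => {G}
  | G, e :: es =>
    { H | ∃ x y z₁ z₃ G', e = s(x, y) ∧ nniMoveData G x y z₁ z₃ G' ∧
        H ∈ nniSeq G' (es.map (nniRelabel x y z₁ z₃)) }
termination_by G l => l.length
decreasing_by simp [List.length_map]

/-- The trees obtainable by NNI operations on the edges of `l` performed in any order. -/
def nniAnyOrder {n : ℕ} (G : SimpleGraph (V n)) (l : List (Sym2 (V n))) :
    Set (SimpleGraph (V n)) :=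
  { H | ∃ l' : List (Sym2 (V n)), l'.Perm l ∧ H ∈ nniSeq G l' }

/-- The distance in `G` between two edges. -/
def edgeDist {n : ℕ} (G : SimpleGraph (V n)) (e f : Sym2 (V n)) : ℕ :=
  sInf { d | ∃ x y, x ∈ e ∧ y ∈ f ∧ d = G.dist x y }

/-- `𝕋(T)`: tuples `(c₁, c₂, j₁, j₂)` where `c₁ ≠ j₁` are cut/join edges of a first SPR
operation on `G` and `c₂ ≠ j₂` are edges of the resulting tree. -/
def sprTuples {n : ℕ} (G : SimpleGraph (V n)) :
    Set (Sym2 (V n) × Sym2 (V n) × Sym2 (V n) × Sym2 (V n)) :=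
  { q | ∃ G' : SimpleGraph (V n), sprMoveOn G q.1 q.2.2.1 G' ∧
      q.2.1 ∈ G'.edgeSet ∧ q.2.2.2 ∈ G'.edgeSet ∧ q.2.1 ≠ q.2.2.2 }

/-- `𝕊(T)`: the subset of `𝕋(T)` where `c₂`, `j₂` are edges of `G` and the four edges are
pairwise at distance at least three in `G`. -/
def sprTuplesSep {n : ℕ} (G : SimpleGraph (V n)) :
    Set (Sym2 (V n) × Sym2 (V n) × Sym2 (V n) × Sym2 (V n)) :=
  { q | q ∈ sprTuples G ∧ q.2.1 ∈ G.edgeSet ∧ q.2.2.2 ∈ G.edgeSet ∧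
      List.Pairwise (fun e f => 3 ≤ edgeDist G e f) [q.1, q.2.1, q.2.2.1, q.2.2.2] }

/-- A (not necessarily binary) phylogenetic tree with `n` leaves: internal vertices have
degree at least three and the leaves are bijectively labelled by `Fin n`. -/
structure PhyloTree (n : ℕ) where
  Vt : Type
  [fintypeV : Fintype Vt]
  G : SimpleGraph Vt
  connected : G.Connected
  acyclic : G.IsAcyclic
  label : Fin n → Vt
  label_inj : Function.Injective label
  leaf_iff : ∀ v : Vt, (G.neighborSet v).ncard = 1 ↔ ∃ i, label i = v
  internal_deg : ∀ v : Vt, (¬ ∃ i, label i = v) → 3 ≤ (G.neighborSet v).ncard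

/-- `i₀`: the number of internal edges of a phylogenetic tree. -/
def internalEdgeCount {n : ℕ} (T : PhyloTree n) : ℕ :=
  ({ e ∈ T.G.edgeSet | ∀ v ∈ e, ¬ ∃ i, T.label i = v }).ncard

/-- The number of trees in `UB(n)` sharing at least `k` non-trivial splits with `T`. -/
def sharedCount (n k : ℕ) (T : PhyloTree n) : ℕ :=
  ({ s : Set (Set (Set (Fin n))) | ∃ G : SimpleGraph (V n),
      ubGraph n G ∧ k ≤ (splits G ∩ splitsL T.G T.label).ncard ∧ s = splits G }).ncard

end Phylo

/-!
Paths of a tree are compared through their edge sets: the edge set of a nontrivial path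
determines its ends, the vertices of degree one in the graph it spans. Classifying the ends gives
`P_k = p_k + h_k + m_k`. For `k ≥ 3`, deleting the two end edges of a path of length `k` leaves a
path of length `k - 2` whose vertices are interior, hence of degree at least two, hence internal;
conversely an internal path from `x` to `y` extends at each end along any of the two edges at `x`
(resp. `y`) that leave it. So `P_k = 4 p_{k-2}`.

For `k = 1`, the internal edges are the `2n - 3` edges of the tree minus the `n` pendant ones. For
`k = 2`, an internal path is a pair of internal neighbours of its middle vertex `x`, so
`p_2 = ∑ₓ C(3 - ℓ(x), 2)` where `ℓ(x) ≤ 2` is the number of leaves adjacent to the internal vertex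
`x`. Since `C(3 - ℓ, 2) + 2ℓ = 3 + C(ℓ, 2)`, `∑ₓ ℓ(x) = n` and `c = ∑ₓ C(ℓ(x), 2)`, this is
`3(n - 2) - 2n + c`.
-/

lemma Set.ncard_eq_sum_ncard_fiber {α β : Type*} [DecidableEq β] {s : Set α} (hs : s.Finite)
    {t : Finset β} {f : α → β} (hf : ∀ a ∈ s, f a ∈ t) :
    s.ncard = ∑ b ∈ t, {a ∈ s | f a = b}.ncard := by
  rw [Set.ncard_eq_toFinset_card s hs,
    Finset.card_eq_sum_card_fiberwise fun a ha => hf a (hs.mem_toFinset.mp ha)]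
  refine Finset.sum_congr rfl fun b _ => ?_
  rw [← Set.ncard_coe_finset, Finset.coe_filter]
  simp

lemma Set.ncard_image_uncurry_mk_offDiag {α : Type*} {s : Set α} (hs : s.Finite) :
    (Sym2.mk.uncurry '' s.offDiag).ncard = s.ncard.choose 2 := by
  classical
  rw [← hs.coe_toFinset, ← Finset.coe_offDiag, ← Finset.coe_image, Set.ncard_coe_finset,
    Sym2.card_image_offDiag, Set.ncard_coe_finset]

lemma Nat.choose_two_add_two_mul_of_add_eq_three {a l : ℕ} (h : a + l = 3) (hl : l ≤ 2) :
    a.choose 2 + 2 * l = 3 + l.choose 2 := by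
  obtain rfl : a = 3 - l := by omega
  interval_cases l <;> rfl

namespace SimpleGraph

variable {V : Type*} {G : SimpleGraph V} {k : ℕ} {u v x y a b z : V}

def pruneLeafEdges (E : Set (Sym2 V)) : Set (Sym2 V) :=
  {e ∈ E | ∀ z ∈ e, ((fromEdgeSet E).neighborSet z).ncard ≠ 1}

def pathEdgeSets (G : SimpleGraph V) (k : ℕ) (Q : V → V → Prop) : Set (Set (Sym2 V)) :=
  {E | ∃ (u v : V) (w : G.Walk u v), w.IsPath ∧ w.length = k ∧ Q u v ∧ E = w.edgeSet}

namespace Walk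

lemma exists_eq_cons_concat (w : G.Walk u v) (hw : 2 ≤ w.length) :
    ∃ (x y : V) (ha : G.Adj u x) (m : G.Walk x y) (hb : G.Adj y v),
      w = cons ha (m.concat hb) := by
  cases w with
  | nil => simp at hw
  | cons ha q =>
    cases q with
    | nil => simp at hw
    | cons h q =>
      obtain ⟨y, m, hb, hm⟩ := exists_cons_eq_concat h q
      exact ⟨_, y, ha, m, hb, by rw [hm]⟩

lemma cons_concat_isPath_iff (ha : G.Adj a x) (m : G.Walk x y) (hb : G.Adj y b) :
    (cons ha (m.concat hb)).IsPath ↔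
      m.IsPath ∧ a ∉ m.support ∧ b ∉ m.support ∧ a ≠ b := by
  rw [cons_isPath_iff, concat_isPath_iff, support_concat, List.mem_append, List.mem_singleton]
  tauto

lemma neighborSet_fromEdgeSet_edgeSet (p : G.Walk u v) (z : V) :
    (fromEdgeSet p.edgeSet).neighborSet z = p.toSubgraph.neighborSet z := by
  ext y
  simp only [mem_neighborSet, fromEdgeSet_adj, Subgraph.mem_neighborSet,
    adj_toSubgraph_iff_mem_edges, mem_edgeSet]
  exact ⟨And.left, fun h => ⟨h, (p.adj_of_mem_edges h).ne⟩⟩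

open scoped Classical in
lemma IsPath.ncard_neighborSet_fromEdgeSet {p : G.Walk u v} (hp : p.IsPath) (hnp : ¬ p.Nil)
    (z : V) : ((fromEdgeSet p.edgeSet).neighborSet z).ncard =
      if z = u ∨ z = v then 1 else if z ∈ p.support then 2 else 0 := by
  rw [neighborSet_fromEdgeSet_edgeSet]
  by_cases hu : z = u
  · subst hu; simp [hp.neighborSet_toSubgraph_startpoint hnp]
  by_cases hv : z = v
  · subst hv; simp [hp.neighborSet_toSubgraph_endpoint hnp]
  by_cases hs : z ∈ p.support
  · obtain ⟨i, rfl, hi⟩ := mem_support_iff_exists_getVert.mp hs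
    have hi0 : i ≠ 0 := by rintro rfl; exact hu (p.getVert_zero)
    have hil : i < p.length := lt_of_le_of_ne hi (by rintro rfl; exact hv p.getVert_length)
    simp [hu, hv, hs, hp.ncard_neighborSet_toSubgraph_internal_eq_two hi0 hil]
  · have : p.toSubgraph.neighborSet z = ∅ :=
      Set.eq_empty_of_forall_notMem fun y hy => hs (p.mem_support_of_adj_toSubgraph hy)
    simp [hu, hv, hs, this]

lemma IsPath.sym2_eq_of_edgeSet_eq {u' v' : V} {p : G.Walk u v} {q : G.Walk u' v'}
    (hp : p.IsPath) (hq : q.IsPath) (hpn : ¬ p.Nil) (hqn : ¬ q.Nil)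
    (h : p.edgeSet = q.edgeSet) : s(u, v) = s(u', v') := by
  refine Sym2.ext fun z => ?_
  have := congrArg (fun E => ((fromEdgeSet E).neighborSet z).ncard) h
  simp only [hp.ncard_neighborSet_fromEdgeSet hpn, hq.ncard_neighborSet_fromEdgeSet hqn] at this
  rw [Sym2.mem_iff, Sym2.mem_iff]
  split_ifs at this <;> tauto

lemma IsPath.mem_support_iff_of_edgeSet_eq {u' v' : V} {p : G.Walk u v} {q : G.Walk u' v'}
    (hp : p.IsPath) (hq : q.IsPath) (hpn : ¬ p.Nil) (hqn : ¬ q.Nil)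
    (h : p.edgeSet = q.edgeSet) : z ∈ p.support ↔ z ∈ q.support := by
  have := congrArg (fun E => ((fromEdgeSet E).neighborSet z).ncard) h
  simp only [hp.ncard_neighborSet_fromEdgeSet hpn, hq.ncard_neighborSet_fromEdgeSet hqn] at this
  split_ifs at this <;> grind [start_mem_support, end_mem_support]

lemma pruneLeafEdges_edgeSet_cons_concat (ha : G.Adj a x) (m : G.Walk x y) (hb : G.Adj y b)
    (hp : (cons ha (m.concat hb)).IsPath) :
    pruneLeafEdges (cons ha (m.concat hb)).edgeSet = m.edgeSet := by
  obtain ⟨-, ham, hbm, -⟩ := (cons_concat_isPath_iff ha m hb).mp hp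
  have hdeg := hp.ncard_neighborSet_fromEdgeSet not_nil_cons
  have hE : (cons ha (m.concat hb)).edgeSet = insert s(a, x) (insert s(y, b) m.edgeSet) := by
    rw [edgeSet_cons, edgeSet_concat, Set.insert_comm]
  ext e
  simp only [pruneLeafEdges, Set.mem_ofPred_eq, hdeg]
  rw [hE, Set.mem_insert_iff, Set.mem_insert_iff]
  constructor
  · rintro ⟨rfl | rfl | he, hends⟩
    · simp at hends
    · simp at hends
    · exact he
  · intro he
    refine ⟨Or.inr (Or.inr he), fun z hz => ?_⟩
    have hzm : z ∈ m.support := mem_support_of_mem_edges he hz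
    have hza : z ≠ a := fun h => ham (h ▸ hzm)
    have hzb : z ≠ b := fun h => hbm (h ▸ hzm)
    split_ifs <;> simp_all

lemma IsPath.two_le_ncard_neighborSet [Finite V] {p : G.Walk u v} (hp : p.IsPath)
    (hz : z ∈ p.support) (hzu : z ≠ u) (hzv : z ≠ v) : 2 ≤ (G.neighborSet z).ncard := by
  have hnp : ¬ p.Nil := fun h => hzu (by simpa [nil_iff_support_eq.mp h] using hz)
  have h2 := hp.ncard_neighborSet_fromEdgeSet hnp z
  rw [neighborSet_fromEdgeSet_edgeSet, if_neg (by tauto), if_pos hz] at h2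
  exact h2 ▸ Set.ncard_le_ncard (p.toSubgraph.neighborSet_subset z) (Set.toFinite _)

end Walk

lemma pathEdgeSets_or (P Q : V → V → Prop) :
    G.pathEdgeSets k (fun u v => P u v ∨ Q u v) = G.pathEdgeSets k P ∪ G.pathEdgeSets k Q := by
  ext E
  simp only [pathEdgeSets, Set.mem_union, Set.mem_ofPred_eq]
  constructor
  · rintro ⟨u, v, w, hw, hl, hP | hQ, rfl⟩
    exacts [Or.inl ⟨u, v, w, hw, hl, hP, rfl⟩, Or.inr ⟨u, v, w, hw, hl, hQ, rfl⟩]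
  · rintro (⟨u, v, w, hw, hl, hP, rfl⟩ | ⟨u, v, w, hw, hl, hQ, rfl⟩)
    exacts [⟨u, v, w, hw, hl, Or.inl hP, rfl⟩, ⟨u, v, w, hw, hl, Or.inr hQ, rfl⟩]

lemma disjoint_pathEdgeSets (hk : k ≠ 0) {P Q : V → V → Prop}
    (h : ∀ u v, P u v → ¬ Q u v ∧ ¬ Q v u) :
    Disjoint (G.pathEdgeSets k P) (G.pathEdgeSets k Q) := by
  rw [Set.disjoint_left]
  rintro _ ⟨u, v, w, hw, hl, hP, rfl⟩ ⟨u', v', w', hw', hl', hQ, hE⟩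
  have hnp : ∀ {a b : V} (p : G.Walk a b), p.length = k → ¬ p.Nil := fun p hp => by
    rw [Walk.not_nil_iff_lt_length]; omega
  rcases Sym2.eq_iff.mp (hw.sym2_eq_of_edgeSet_eq hw' (hnp w hl) (hnp w' hl') hE) with
    ⟨rfl, rfl⟩ | ⟨rfl, rfl⟩
  exacts [(h _ _ hP).1 hQ, (h _ _ hP).2 hQ]

lemma pathEdgeSets_one_eq_image (R : V → Prop) :
    G.pathEdgeSets 1 (fun u v => R u ∧ R v) =
      (fun e => {e}) '' {e ∈ G.edgeSet | ∀ z ∈ e, R z} := by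
  ext E
  simp only [pathEdgeSets, Set.mem_ofPred_eq, Set.mem_image]
  constructor
  · rintro ⟨u, v, w, -, hl, ⟨hu, hv⟩, rfl⟩
    cases w with
    | nil => simp at hl
    | cons h q =>
      cases q with
      | cons _ _ => simp at hl
      | nil =>
        refine ⟨s(u, v), ⟨h, fun z hz => ?_⟩, by ext; simp [Walk.edgeSet]⟩
        rcases Sym2.mem_iff.mp hz with rfl | rfl <;> assumption
  · rintro ⟨e, ⟨he, hR⟩, rfl⟩
    induction e using Sym2.ind with
    | _ u v =>
      rw [mem_edgeSet] at he
      refine ⟨u, v, .cons he .nil, by simp [he.ne], rfl,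
        ⟨hR u (Sym2.mem_mk_left u v), hR v (Sym2.mem_mk_right u v)⟩, ?_⟩
      ext; simp [Walk.edgeSet]

lemma ncard_pathEdgeSets_one (R : V → Prop) :
    (G.pathEdgeSets 1 fun u v => R u ∧ R v).ncard =
      {e ∈ G.edgeSet | ∀ z ∈ e, R z}.ncard := by
  rw [pathEdgeSets_one_eq_image, Set.ncard_image_of_injective _ Set.singleton_injective]

def starEdges (x : V) (s : Sym2 V) : Set (Sym2 V) := (s(x, ·)) '' {c | c ∈ s}

lemma mk_mem_starEdges_iff {x c : V} {s : Sym2 V} : s(x, c) ∈ starEdges x s ↔ c ∈ s :=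
  ⟨fun ⟨_, hd, h⟩ => Sym2.congr_right.mp h ▸ hd, fun h => ⟨c, h, rfl⟩⟩

lemma starEdges_injective (x : V) : Function.Injective (starEdges x) :=
  fun s t hst => Sym2.ext fun c => by rw [← mk_mem_starEdges_iff, hst, mk_mem_starEdges_iff]

lemma starEdges_mk (x a b : V) : starEdges x s(a, b) = {s(a, x), s(x, b)} := by
  ext e
  simp [starEdges, Sym2.mem_iff, or_and_right, exists_or, Sym2.eq_swap, eq_comm]

lemma eq_of_mk_mem_starEdges {x x' a : V} {s : Sym2 V} (hxx' : x ≠ x')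
    (h : s(x, a) ∈ starEdges x' s) : a = x' := by
  obtain ⟨c, -, hc⟩ := h
  rcases Sym2.eq_iff.mp hc with ⟨h, -⟩ | ⟨h, -⟩
  · exact absurd h.symm hxx'
  · exact h.symm

lemma pathEdgeSets_two_eq_iUnion (R : V → Prop) :
    G.pathEdgeSets 2 (fun u v => R u ∧ R v) =
      ⋃ x, starEdges x '' (Sym2.mk.uncurry '' {c | G.Adj x c ∧ R c}.offDiag) := by
  ext E
  simp only [pathEdgeSets, Set.mem_ofPred_eq, Set.mem_iUnion, Set.mem_image, Set.mem_offDiag,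
    Prod.exists, Function.uncurry_apply_pair]
  constructor
  · rintro ⟨a, b, w, hw, hlen, ⟨ha, hb⟩, rfl⟩
    cases w with
    | nil => simp at hlen
    | cons h₁ q =>
      cases q with
      | nil => simp at hlen
      | cons h₂ q =>
        cases q with
        | cons _ _ => simp at hlen
        | nil =>
          refine ⟨_, _, ⟨a, b, ⟨⟨h₁.symm, ha⟩, ⟨h₂, hb⟩, ?_⟩, rfl⟩, ?_⟩
          · simp_all [Walk.isPath_def]
          · rw [starEdges_mk]; ext; simp [Walk.edgeSet]
  · rintro ⟨x, _, ⟨a, b, ⟨⟨hxa, ha⟩, ⟨hxb, hb⟩, hab⟩, rfl⟩, rfl⟩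
    refine ⟨a, b, .cons hxa.symm (.cons hxb .nil), ?_, rfl, ⟨ha, hb⟩, ?_⟩
    · simp [Walk.isPath_def, hab, hxa.ne', hxb.ne]
    · rw [starEdges_mk]; ext; simp [Walk.edgeSet]

lemma ncard_pathEdgeSets_two [Fintype V] (R : V → Prop) :
    (G.pathEdgeSets 2 fun u v => R u ∧ R v).ncard =
      ∑ x, {c | G.Adj x c ∧ R c}.ncard.choose 2 := by
  have hdisj : Pairwise fun x x' =>
      Disjoint (starEdges x '' (Sym2.mk.uncurry '' {c | G.Adj x c ∧ R c}.offDiag))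
        (starEdges x' '' (Sym2.mk.uncurry '' {c | G.Adj x' c ∧ R c}.offDiag)) := by
    intro x x' hxx'
    rw [Set.disjoint_left]
    rintro _ ⟨_, ⟨⟨a, b⟩, ⟨-, -, hab⟩, rfl⟩, rfl⟩ ⟨t, -, hE⟩
    have ha := eq_of_mk_mem_starEdges hxx'
      (hE ▸ mk_mem_starEdges_iff.mpr (Sym2.mem_mk_left a b))
    have hb := eq_of_mk_mem_starEdges hxx'
      (hE ▸ mk_mem_starEdges_iff.mpr (Sym2.mem_mk_right a b))
    exact hab (ha.trans hb.symm)
  rw [pathEdgeSets_two_eq_iUnion, Set.ncard_iUnion_of_finite (fun _ => Set.toFinite _) hdisj,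
    finsum_eq_sum_of_fintype]
  refine Finset.sum_congr rfl fun x _ => ?_
  rw [Set.ncard_image_of_injective _ (starEdges_injective x),
    Set.ncard_image_uncurry_mk_offDiag (Set.toFinite _)]

namespace IsAcyclic

lemma eq_snd_of_adj_of_mem_support (hG : G.IsAcyclic) {m : G.Walk x y} (hm : m.IsPath)
    (ha : G.Adj x a) (has : a ∈ m.support) : a = m.snd := by
  classical
  have hq := congrArg Subtype.val <| (hG.subsingleton_path x a).elim
    ⟨m.takeUntil a has, hm.takeUntil has⟩ ⟨.cons ha .nil, by simp [ha.ne]⟩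
  have hedge : s(x, a) ∈ m.edges :=
    m.edges_takeUntil_subset_edges has (by simp only at hq; simp [hq])
  exact (hm.snd_of_toSubgraph_adj (Walk.adj_toSubgraph_iff_mem_edges.mpr hedge)).symm

lemma neighborSet_sdiff_support (hG : G.IsAcyclic) {m : G.Walk x y} (hm : m.IsPath) :
    G.neighborSet x \ {a | a ∈ m.support} = G.neighborSet x \ {m.snd} := by
  ext a
  simp only [Set.mem_sdiff, mem_neighborSet, Set.mem_ofPred_eq, Set.mem_singleton_iff]
  exact and_congr_right fun ha => ⟨fun has h => has (h ▸ m.getVert_mem_support 1),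
    fun h has => h (hG.eq_snd_of_adj_of_mem_support hm ha has)⟩

lemma isPath_cons_concat (hG : G.IsAcyclic) {m : G.Walk x y} (hm : m.IsPath) (hnp : ¬ m.Nil)
    (ha : G.Adj a x) (hb : G.Adj y b) (ham : a ∉ m.support) (hbm : b ∉ m.support) :
    (Walk.cons ha (m.concat hb)).IsPath := by
  refine (Walk.cons_concat_isPath_iff ha m hb).mpr ⟨hm, ham, hbm, ?_⟩
  rintro rfl
  have hq := congrArg (fun p => p.1.length) <| (hG.subsingleton_path x a).elim
    ⟨m.concat hb, hm.concat hbm hb⟩ ⟨.cons ha.symm .nil, by simp [ha.ne']⟩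
  simp only [Walk.length_concat, Walk.length_cons, Walk.length_nil] at hq
  exact hnp (Walk.length_eq_zero_iff.mp (by omega))

lemma pruneLeafEdges_fiber_eq_image (hG : G.IsAcyclic) {m : G.Walk x y} (hm : m.IsPath)
    (hnp : ¬ m.Nil) :
    {E ∈ G.pathEdgeSets (m.length + 2) (fun _ _ => True) | pruneLeafEdges E = m.edgeSet} =
      (fun p : V × V => insert s(x, p.1) (insert s(y, p.2) m.edgeSet)) ''
        ((G.neighborSet x \ {a | a ∈ m.support}) ×ˢ
          (G.neighborSet y \ {b | b ∈ m.support})) := by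
  ext E
  simp only [pathEdgeSets, Set.mem_ofPred_eq, Set.mem_image, Set.mem_prod, Set.mem_sdiff,
    mem_neighborSet, Prod.exists, true_and]
  constructor
  · rintro ⟨⟨a, b, w, hw, hlen, rfl⟩, hprune⟩
    obtain ⟨x', y', ha, m', hb, rfl⟩ := w.exists_eq_cons_concat (by omega)
    rw [Walk.pruneLeafEdges_edgeSet_cons_concat ha m' hb hw] at hprune
    obtain ⟨hm', ham, hbm, -⟩ := (Walk.cons_concat_isPath_iff ha m' hb).mp hw
    have hnp' : ¬ m'.Nil := by
      have := Walk.not_nil_iff_lt_length.mp hnp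
      simp only [Walk.length_cons, Walk.length_concat] at hlen
      rw [Walk.not_nil_iff_lt_length]
      omega
    have hsupp := fun z => hm'.mem_support_iff_of_edgeSet_eq (z := z) hm hnp' hnp hprune
    rw [Walk.edgeSet_cons, Walk.edgeSet_concat, hprune]
    rcases Sym2.eq_iff.mp (hm'.sym2_eq_of_edgeSet_eq hm hnp' hnp hprune) with
      ⟨rfl, rfl⟩ | ⟨rfl, rfl⟩
    · refine ⟨a, b, ⟨⟨ha.symm, by rwa [← hsupp]⟩, hb, by rwa [← hsupp]⟩, ?_⟩
      rw [Sym2.eq_swap]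
    · refine ⟨b, a, ⟨⟨hb, by rwa [← hsupp]⟩, ha.symm, by rwa [← hsupp]⟩, ?_⟩
      rw [Set.insert_comm, Sym2.eq_swap (a := a)]
  · rintro ⟨a, b, ⟨⟨ha, ham⟩, hb, hbm⟩, rfl⟩
    have hw := hG.isPath_cons_concat hm hnp ha.symm hb ham hbm
    have hE : (Walk.cons ha.symm (m.concat hb)).edgeSet =
        insert s(x, a) (insert s(y, b) m.edgeSet) := by
      rw [Walk.edgeSet_cons, Walk.edgeSet_concat, Sym2.eq_swap (a := a)]
    refine ⟨⟨a, b, _, hw, by simp, hE.symm⟩, ?_⟩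
    rw [← hE, Walk.pruneLeafEdges_edgeSet_cons_concat _ _ _ hw]

lemma ncard_pruneLeafEdges_fiber (hG : G.IsAcyclic) [Finite V] {m : G.Walk x y} (hm : m.IsPath)
    (hnp : ¬ m.Nil) :
    {E ∈ G.pathEdgeSets (m.length + 2) (fun _ _ => True) | pruneLeafEdges E = m.edgeSet}.ncard =
      ((G.neighborSet x).ncard - 1) * ((G.neighborSet y).ncard - 1) := by
  have hxy : x ≠ y := by rintro rfl; exact hnp (Walk.isPath_iff_nil.mp hm)
  have key : ∀ {z c a' b' : V}, c ∉ m.support → z ∈ m.support →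
      s(z, c) ∈ insert s(x, a') (insert s(y, b') m.edgeSet) →
        (z = x ∧ c = a') ∨ (z = y ∧ c = b') := by
    intro z c a' b' hc hz h
    rcases h with h | h | h
    · rcases Sym2.eq_iff.mp h with h | ⟨-, rfl⟩
      · exact Or.inl h
      · exact absurd m.start_mem_support hc
    · rcases Sym2.eq_iff.mp h with h | ⟨-, rfl⟩
      · exact Or.inr h
      · exact absurd m.end_mem_support hc
    · exact absurd (Walk.snd_mem_support_of_mem_edges _ h) hc
  have hinj : Set.InjOn (fun p : V × V => insert s(x, p.1) (insert s(y, p.2) m.edgeSet))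
      ((G.neighborSet x \ {a | a ∈ m.support}) ×ˢ
        (G.neighborSet y \ {b | b ∈ m.support})) := by
    rintro ⟨a, b⟩ ⟨⟨-, ha⟩, -, hb⟩ ⟨a', b'⟩ - hE
    simp only at hE
    have h₁ := key ha m.start_mem_support (hE ▸ Set.mem_insert _ _)
    have h₂ := key hb m.end_mem_support (hE ▸ Set.mem_insert_of_mem _ (Set.mem_insert _ _))
    simp only [Prod.mk.injEq]
    tauto
  have hrev : {b | b ∈ m.support} = {b | b ∈ m.reverse.support} := by simp
  rw [hG.pruneLeafEdges_fiber_eq_image hm hnp, hinj.ncard_image, Set.ncard_prod,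
    hG.neighborSet_sdiff_support hm, hrev, hG.neighborSet_sdiff_support hm.reverse,
    Set.ncard_sdiff_singleton_of_mem (show m.snd ∈ G.neighborSet x from Walk.adj_snd hnp),
    Set.ncard_sdiff_singleton_of_mem
      (show m.reverse.snd ∈ G.neighborSet y from Walk.adj_snd (by simpa using hnp))]

end IsAcyclic

end SimpleGraph

namespace Phylo

open SimpleGraph

variable {n : ℕ} {G : SimpleGraph (V n)}

lemma not_isLeafV_iff {v : V n} : ¬ isLeafV v ↔ isInternalV v := by
  cases v <;> simp [isLeafV, isInternalV]

lemma pathCount_eq (k : ℕ) :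
    pathCount G k = (G.pathEdgeSets k fun _ _ => True).ncard := by
  simp [pathCount, pathEdgeSets, Walk.edgeSet]

lemma oneLeafPathCount_eq (k : ℕ) :
    oneLeafPathCount G k = (G.pathEdgeSets k fun u v =>
      (isLeafV u ∧ ¬ isLeafV v) ∨ (¬ isLeafV u ∧ isLeafV v)).ncard := rfl

lemma leafLeafPathCount_eq (k : ℕ) :
    leafLeafPathCount G k = (G.pathEdgeSets k fun u v => isLeafV u ∧ isLeafV v).ncard := by
  simp [leafLeafPathCount, pathEdgeSets, Walk.edgeSet, and_assoc]

lemma leafNeighborCount_eq_ncard (x : V n) :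
    leafNeighborCount G x = (G.neighborSet x \ {c | isInternalV c}).ncard := by
  rw [leafNeighborCount, ← Set.ncard_image_of_injective _ Sum.inl_injective]
  congr 1
  ext c
  cases c <;> simp [isInternalV, adj_comm]

lemma ncard_internal_adj_add_leafNeighborCount (x : V n) :
    {c | G.Adj x c ∧ isInternalV c}.ncard + leafNeighborCount G x = (G.neighborSet x).ncard := by
  rw [leafNeighborCount_eq_ncard]
  exact Set.ncard_inter_add_ncard_sdiff_eq_ncard _ _

lemma ncard_neighborSet_of_isLeafV (hG : ubGraph n G) {v : V n} (hv : isLeafV v) :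
    (G.neighborSet v).ncard = 1 := by
  obtain ⟨i, rfl⟩ := hv
  exact hG.2.2.1 i

lemma ncard_neighborSet_of_isInternalV (hG : ubGraph n G) {v : V n} (hv : isInternalV v) :
    (G.neighborSet v).ncard = 3 := by
  obtain ⟨j, rfl⟩ := hv
  exact hG.2.2.2 j

lemma eq_of_adj_of_isLeafV (hG : ubGraph n G) {u a b : V n} (hu : isLeafV u) (ha : G.Adj u a)
    (hb : G.Adj u b) : a = b :=
  (Set.ncard_le_one (Set.toFinite _)).mp (ncard_neighborSet_of_isLeafV hG hu).le a ha b hb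

lemma isInternalV_of_mem_support (hG : ubGraph n G) {u v z : V n} {p : G.Walk u v}
    (hp : p.IsPath) (hz : z ∈ p.support) (hzu : z ≠ u) (hzv : z ≠ v) : isInternalV z := by
  rw [← not_isLeafV_iff]
  intro hl
  have := hp.two_le_ncard_neighborSet hz hzu hzv
  rw [ncard_neighborSet_of_isLeafV hG hl] at this
  omega

lemma internalPathCount_eq (hG : ubGraph n G) (k : ℕ) :
    internalPathCount G k =
      (G.pathEdgeSets k fun u v => isInternalV u ∧ isInternalV v).ncard := by
  rw [internalPathCount]
  congr 1
  ext E
  simp only [pathEdgeSets, Set.mem_ofPred_eq, Walk.edgeSet]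
  refine exists₃_congr fun u v w => and_congr_right fun hw => and_congr_right fun _ =>
    and_congr_left fun _ => ⟨fun h => ⟨h u w.start_mem_support, h v w.end_mem_support⟩, ?_⟩
  rintro ⟨hu, hv⟩ z hz
  by_cases hzu : z = u
  · exact hzu ▸ hu
  by_cases hzv : z = v
  · exact hzv ▸ hv
  exact isInternalV_of_mem_support hG hw hz hzu hzv

lemma exists_adj_isInternalV (hn : 4 ≤ n) (hG : ubGraph n G) (x : V n) :
    ∃ a, G.Adj x a ∧ isInternalV a := by
  obtain ⟨y, hyx, hy⟩ : ∃ y : V n, y ≠ x ∧ isInternalV y := by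
    by_cases hx : x = Sum.inr ⟨0, by omega⟩
    · exact ⟨Sum.inr ⟨1, by omega⟩, by simp [hx], _, rfl⟩
    · exact ⟨Sum.inr ⟨0, by omega⟩, Ne.symm hx, _, rfl⟩
  obtain ⟨p, hp⟩ := (hG.1.preconnected x y).exists_isPath
  have hnp : ¬ p.Nil := Walk.not_nil_of_ne hyx.symm
  refine ⟨p.snd, Walk.adj_snd hnp, ?_⟩
  by_cases hsy : p.snd = y
  · exact hsy.symm ▸ hy
  exact isInternalV_of_mem_support hG hp (p.getVert_mem_support 1) (Walk.adj_snd hnp).ne' hsy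

lemma isInternalV_of_adj_of_isLeafV (hn : 4 ≤ n) (hG : ubGraph n G) {u a : V n}
    (hu : isLeafV u) (ha : G.Adj u a) : isInternalV a := by
  obtain ⟨b, hb, hbi⟩ := exists_adj_isInternalV hn hG u
  exact eq_of_adj_of_isLeafV hG hu hb ha ▸ hbi

lemma leafNeighborCount_le_two (hn : 4 ≤ n) (hG : ubGraph n G) {x : V n} (hx : isInternalV x) :
    leafNeighborCount G x ≤ 2 := by
  obtain ⟨a, hxa, ha⟩ := exists_adj_isInternalV hn hG x
  have h₁ : 0 < {c | G.Adj x c ∧ isInternalV c}.ncard :=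
    (Set.ncard_pos (Set.toFinite _)).mpr ⟨a, hxa, ha⟩
  have h₂ := ncard_internal_adj_add_leafNeighborCount (G := G) x
  rw [ncard_neighborSet_of_isInternalV hG hx] at h₂
  omega

lemma leafNeighborCount_of_isLeafV (hn : 4 ≤ n) (hG : ubGraph n G) {x : V n} (hx : isLeafV x) :
    leafNeighborCount G x = 0 := by
  rw [leafNeighborCount, Set.ncard_eq_zero]
  refine Set.eq_empty_of_forall_notMem fun i hi => ?_
  exact (not_isLeafV_iff.mpr (isInternalV_of_adj_of_isLeafV hn hG ⟨i, rfl⟩ hi)) hx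

lemma ncard_edgeSet (hG : ubGraph n G) : G.edgeSet.ncard + 1 = n + (n - 2) := by
  classical
  have h := (IsTree.mk hG.1 hG.2.1).card_edgeFinset
  rwa [Fintype.card_sum, Fintype.card_fin, Fintype.card_fin, edgeFinset,
    ← Set.ncard_eq_toFinset_card'] at h

lemma ncard_iUnion_incidenceSet_inl (hn : 4 ≤ n) (hG : ubGraph n G) :
    (⋃ i : Fin n, G.incidenceSet (Sum.inl i)).ncard = n := by
  have hdisj : Pairwise fun i j : Fin n =>
      Disjoint (G.incidenceSet (Sum.inl i)) (G.incidenceSet (Sum.inl j)) := fun i j hij =>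
    Set.disjoint_iff_inter_eq_empty.mpr <| G.incidenceSet_inter_incidenceSet_of_not_adj
      (fun h => not_isLeafV_iff.mpr
        (isInternalV_of_adj_of_isLeafV hn hG ⟨i, rfl⟩ h) ⟨j, rfl⟩)
      (by simpa using hij)
  have hone : ∀ i : Fin n, (G.incidenceSet (Sum.inl i)).ncard = 1 := fun i => by
    rw [Set.ncard_congr' (G.incidenceSetEquivNeighborSet _)]
    exact hG.2.2.1 i
  rw [Set.ncard_iUnion_of_finite (fun _ => Set.toFinite _) hdisj, finsum_eq_sum_of_fintype]
  simp [hone]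

lemma internalPathCount_one (hn : 4 ≤ n) (hG : ubGraph n G) : internalPathCount G 1 = n - 3 := by
  have hint : {e ∈ G.edgeSet | ∀ z ∈ e, isInternalV z} =
      G.edgeSet \ ⋃ i : Fin n, G.incidenceSet (Sum.inl i) := by
    ext e
    simp only [Set.mem_ofPred_eq, Set.mem_sdiff, Set.mem_iUnion, incidenceSet, not_exists,
      not_and]
    refine and_congr_right fun he => ⟨fun h i _ hi => not_isLeafV_iff.mpr (h _ hi) ⟨i, rfl⟩,
      fun h z hz => ?_⟩
    cases z with
    | inl i => exact absurd hz (h i he)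
    | inr j => exact ⟨j, rfl⟩
  have hE := ncard_edgeSet hG
  rw [internalPathCount_eq hG, ncard_pathEdgeSets_one, hint,
    Set.ncard_sdiff' (Set.iUnion_subset fun i => G.incidenceSet_subset _),
    ncard_iUnion_incidenceSet_inl hn hG]
  omega

lemma sum_leafNeighborCount (hG : ubGraph n G) : ∑ x, leafNeighborCount G x = n := by
  have hcover : (⋃ x, {i : Fin n | G.Adj (Sum.inl i) x}) = Set.univ := by
    refine Set.eq_univ_of_forall fun i => ?_
    obtain ⟨x, hx⟩ := (Set.ncard_pos (Set.toFinite _)).mp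
      (ncard_neighborSet_of_isLeafV hG ⟨i, rfl⟩ ▸ Nat.one_pos)
    exact Set.mem_iUnion.mpr ⟨x, hx⟩
  have hdisj : Pairwise fun x y : V n =>
      Disjoint {i : Fin n | G.Adj (Sum.inl i) x} {i : Fin n | G.Adj (Sum.inl i) y} :=
    fun x y hxy => Set.disjoint_left.mpr fun i hx hy =>
      hxy (eq_of_adj_of_isLeafV hG ⟨i, rfl⟩ hx hy)
  have h := Set.ncard_iUnion_of_finite (fun _ => Set.toFinite _) hdisj
  rw [hcover, Set.ncard_univ, Nat.card_fin, finsum_eq_sum_of_fintype] at h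
  exact h.symm

lemma cherryCount_eq_sum (hG : ubGraph n G) :
    cherryCount G = ∑ x, (leafNeighborCount G x).choose 2 := by
  have hU : cherrySet G = ⋃ x, Sym2.mk.uncurry '' {i : Fin n | G.Adj (Sum.inl i) x}.offDiag := by
    ext c
    simp only [cherrySet, Set.mem_ofPred_eq, Set.mem_iUnion, Set.mem_image, Set.mem_offDiag,
      Prod.exists, Function.uncurry_apply_pair]
    constructor
    · rintro ⟨i, j, x, hij, rfl, hi, hj⟩
      exact ⟨x, i, j, ⟨hi, hj, hij⟩, rfl⟩
    · rintro ⟨x, i, j, ⟨hi, hj, hij⟩, rfl⟩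
      exact ⟨i, j, x, hij, rfl, hi, hj⟩
  have hmem : ∀ {x : V n} {c : Sym2 (Fin n)} {i : Fin n},
      c ∈ Sym2.mk.uncurry '' {i : Fin n | G.Adj (Sum.inl i) x}.offDiag → i ∈ c →
        G.Adj (Sum.inl i) x := by
    rintro x _ i ⟨⟨a, b⟩, ⟨ha, hb, -⟩, rfl⟩ hi
    rcases Sym2.mem_iff.mp hi with rfl | rfl <;> assumption
  have hdisj : Pairwise fun x y : V n =>
      Disjoint (Sym2.mk.uncurry '' {i : Fin n | G.Adj (Sum.inl i) x}.offDiag)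
        (Sym2.mk.uncurry '' {i : Fin n | G.Adj (Sum.inl i) y}.offDiag) := by
    refine fun x y hxy => Set.disjoint_left.mpr fun c hx hy => ?_
    induction c using Sym2.ind with
    | _ i j =>
      exact hxy (eq_of_adj_of_isLeafV hG ⟨i, rfl⟩ (hmem hx (Sym2.mem_mk_left i j))
        (hmem hy (Sym2.mem_mk_left i j)))
  rw [cherryCount, hU, Set.ncard_iUnion_of_finite (fun _ => Set.toFinite _) hdisj,
    finsum_eq_sum_of_fintype]
  exact Finset.sum_congr rfl fun x _ => Set.ncard_image_uncurry_mk_offDiag (Set.toFinite _)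

lemma internalPathCount_two (hn : 4 ≤ n) (hG : ubGraph n G) :
    internalPathCount G 2 = n + cherryCount G - 6 := by
  have hleaf : ∀ i : Fin n, {c | G.Adj (Sum.inl i) c ∧ isInternalV c}.ncard.choose 2 = 0 :=
    fun i => Nat.choose_eq_zero_of_lt <| lt_of_le_of_lt
      (Set.ncard_le_ncard (t := G.neighborSet (Sum.inl i)) (fun c hc => hc.1) (Set.toFinite _))
      (by rw [ncard_neighborSet_of_isLeafV hG ⟨i, rfl⟩]; norm_num)
  have hinternal : ∀ j : Fin (n - 2),
      {c | G.Adj (Sum.inr j) c ∧ isInternalV c}.ncard.choose 2 +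
          2 * leafNeighborCount G (Sum.inr j) =
        3 + (leafNeighborCount G (Sum.inr j)).choose 2 := fun j =>
    Nat.choose_two_add_two_mul_of_add_eq_three
      (ncard_internal_adj_add_leafNeighborCount (Sum.inr j) ▸
        ncard_neighborSet_of_isInternalV hG ⟨j, rfl⟩)
      (leafNeighborCount_le_two hn hG ⟨j, rfl⟩)
  have hsum := Finset.sum_congr rfl fun j (_ : j ∈ Finset.univ) => hinternal j
  have hℓ := sum_leafNeighborCount hG
  have hc := cherryCount_eq_sum hG
  rw [internalPathCount_eq hG, ncard_pathEdgeSets_two]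
  rw [Fintype.sum_sum_type] at hℓ hc ⊢
  simp only [hleaf, leafNeighborCount_of_isLeafV hn hG ⟨_, rfl⟩, Finset.sum_const_zero,
    zero_add, Nat.choose_zero_succ] at hℓ hc ⊢
  rw [Finset.sum_add_distrib, Finset.sum_add_distrib, ← Finset.mul_sum, Finset.sum_const,
    Finset.card_univ, Fintype.card_fin, smul_eq_mul] at hsum
  omega

lemma internalPathCount_add_oneLeafPathCount_add_leafLeafPathCount (hG : ubGraph n G) {k : ℕ}
    (hk : k ≠ 0) :
    internalPathCount G k + oneLeafPathCount G k + leafLeafPathCount G k = pathCount G k := by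
  have hsplit : G.pathEdgeSets k (fun _ _ => True) =
      G.pathEdgeSets k (fun u v => isInternalV u ∧ isInternalV v) ∪
        (G.pathEdgeSets k
            (fun u v => (isLeafV u ∧ ¬ isLeafV v) ∨ (¬ isLeafV u ∧ isLeafV v)) ∪
          G.pathEdgeSets k fun u v => isLeafV u ∧ isLeafV v) := by
    rw [← pathEdgeSets_or, ← pathEdgeSets_or]
    congr
    ext u v
    simp only [← not_isLeafV_iff, true_iff]
    tauto
  have hdisj : ∀ {P Q : V n → V n → Prop}, (∀ u v, P u v → ¬ Q u v ∧ ¬ Q v u) →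
      Disjoint (G.pathEdgeSets k P) (G.pathEdgeSets k Q) := disjoint_pathEdgeSets hk
  rw [internalPathCount_eq hG, oneLeafPathCount_eq, leafLeafPathCount_eq, pathCount_eq, hsplit,
    Set.ncard_union_eq (Set.disjoint_union_right.mpr ⟨hdisj ?_, hdisj ?_⟩),
    Set.ncard_union_eq (hdisj ?_), add_assoc]
  all_goals intro u v; grind [not_isLeafV_iff]

lemma pathCount_add_two (hG : ubGraph n G) {k : ℕ} (hk : k ≠ 0) :
    pathCount G (k + 2) = 4 * internalPathCount G k := by
  classical
  have hfin := (G.pathEdgeSets k fun u v => isInternalV u ∧ isInternalV v).toFinite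
  rw [pathCount_eq, internalPathCount_eq hG,
    Set.ncard_eq_sum_ncard_fiber (Set.toFinite _) (t := hfin.toFinset)
      (f := pruneLeafEdges) ?_,
    Set.ncard_eq_toFinset_card _ hfin, Finset.card_eq_sum_ones, Finset.mul_sum, mul_one]
  · refine Finset.sum_congr rfl fun E hE => ?_
    obtain ⟨x, y, m, hm, rfl, ⟨hx, hy⟩, rfl⟩ := hfin.mem_toFinset.mp hE
    rw [hG.2.1.ncard_pruneLeafEdges_fiber hm (by rw [Walk.not_nil_iff_lt_length]; omega),
      ncard_neighborSet_of_isInternalV hG hx, ncard_neighborSet_of_isInternalV hG hy]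
  · rintro _ ⟨a, b, w, hw, hlen, -, rfl⟩
    obtain ⟨x, y, ha, m, hb, rfl⟩ := w.exists_eq_cons_concat (by omega)
    obtain ⟨hm, ham, hbm, -⟩ := (Walk.cons_concat_isPath_iff ha m hb).mp hw
    have hint : ∀ z ∈ m.support, isInternalV z := fun z hz =>
      isInternalV_of_mem_support hG hw (by simp [hz]) (fun h => ham (h ▸ hz))
        (fun h => hbm (h ▸ hz))
    rw [hfin.mem_toFinset, Walk.pruneLeafEdges_edgeSet_cons_concat ha m hb hw]
    exact ⟨x, y, m, hm, by simpa using hlen, ⟨hint x m.start_mem_support,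
      hint y m.end_mem_support⟩, rfl⟩

end Phylo

/-- For `T ∈ UB(n)` with `n ≥ 4` leaves and `c` cherries: `p₁(T) = n − 3`,
`p₂(T) = n + c − 6`, and for every `k ≥ 3`,
`p_k(T) = 4·p_{k−2}(T) − h_k(T) − m_k(T)`. -/
theorem internal_path_recursion (n : ℕ) (hn : 4 ≤ n) (G : SimpleGraph (Phylo.V n))
    (hG : Phylo.ubGraph n G) :
    Phylo.internalPathCount G 1 = n - 3 ∧
    Phylo.internalPathCount G 2 = n + Phylo.cherryCount G - 6 ∧
    ∀ k : ℕ, 3 ≤ k →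
      (Phylo.internalPathCount G k : ℤ) =
        4 * (Phylo.internalPathCount G (k - 2) : ℤ) -
          (Phylo.oneLeafPathCount G k : ℤ) - (Phylo.leafLeafPathCount G k : ℤ) := by
  refine ⟨Phylo.internalPathCount_one hn hG, Phylo.internalPathCount_two hn hG, fun k hk => ?_⟩
  obtain ⟨k, rfl⟩ : ∃ j, k = j + 2 := ⟨k - 2, by omega⟩
  have hrec := Phylo.pathCount_add_two hG (k := k) (by omega)
  rw [← Phylo.internalPathCount_add_oneLeafPathCount_add_leafLeafPathCount hG (by omega)] at hrec
  rw [Nat.add_sub_cancel]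
  omega
end
end

section
/- For every fixed positive integer k there exists a constant M_k > 0 such that for all T ∈ UB(n) with n ≥ 4: (i) the number A_{T,k} of sets of k distinct, pairwise non-adjacent internal edges of T (for 1 ≤ k ≤ n−3) satisfies (1/k!)n^k − (k(5k+1)/(2·k!))n^{k−1} − M_k·n^{k−2} ≤ A_{T,k} ≤ (1/k!)n^k − (k(k+2)/k!)n^{k−1} + M_k·n^{k−2}; and (ii) the number B_{T,k} of sets of k distinct internal edges of T in which exactly two of the edges are adjacent (for 2 ≤ k ≤ n−3) satisfies (1/(2(k−2)!))n^{k−1} − M_k·n^{k−2} ≤ B_{T,k} ≤ (2/(k−2)!)n^{k−1} + M_k·n^{k−2}. -/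
open SimpleGraph

noncomputable section

/-!
A tree in `UB(n)` has `2n - 3` edges, `n` of them at leaves, so `N = n - 3` internal edges, and
each of the `n - 2` internal vertices meets `d ≤ 3` of them. The number of adjacent pairs of
internal edges is `P = ∑ C(d, 2)`, and `∑ d = 2N` together with `2d - 3 ≤ C(d, 2) ≤ d` gives
`n - 6 ≤ P ≤ 2(n - 3)`.

A `k`-set of internal edges is counted by `A` unless it contains one of the `P` adjacent pairs,
so `C(N, k) - P C(N - 2, k - 2) ≤ A`, and since `A + B ≤ C(N, k)` also `B ≤ P C(N - 2, k - 2)`.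
Conversely, an adjacent pair `p` together with `k - 2` pairwise non-adjacent edges none of which
meets `p` is a set counted by `B`, and each `p` has at least `C(n - 15, k - 2) - P C(n, k - 4)`
such completions; hence `B ≥ n^(k-1)/(k-2)! - O(n^(k-2))`, and `A ≤ C(N, k) - B` gives the upper
bound on `A`. Binomial coefficients are compared with powers of `n` through
`k! C(n - c, k) = ∏ (n - c - i)` and
`x^k - S x^(k-1) ≤ ∏ (x - a_i) ≤ x^k - S x^(k-1) + S^2 x^(k-2)` for `0 ≤ a_i ≤ x`, `S = ∑ a_i`.
-/

open Finset

namespace Phylo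

open scoped Nat Classical

section SubsetFamilies

variable {β : Type} [DecidableEq β]

def avoiding (J : Finset β) (m : ℕ) (F : Finset (Finset β)) : Finset (Finset β) :=
  (J.powersetCard m).filter fun t => ∀ q ∈ F, ¬ q ⊆ t

lemma choose_card_le_card_avoiding_add_sum (J : Finset β) (m : ℕ) (F : Finset (Finset β)) :
    (#J).choose m ≤ #(avoiding J m F) + ∑ q ∈ F, #((J.powersetCard m).filter (q ⊆ ·)) := by
  rw [← card_powersetCard]
  calc #(J.powersetCard m)
      ≤ #(avoiding J m F ∪ F.biUnion fun q => (J.powersetCard m).filter (q ⊆ ·)) := by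
        refine card_le_card fun t ht => ?_
        by_cases h : ∀ q ∈ F, ¬ q ⊆ t
        · exact mem_union_left _ (mem_filter.2 ⟨ht, h⟩)
        · push Not at h
          obtain ⟨q, hq, hqt⟩ := h
          exact mem_union_right _ (mem_biUnion.2 ⟨q, hq, mem_filter.2 ⟨ht, hqt⟩⟩)
    _ ≤ _ := (card_union_le _ _).trans (add_le_add le_rfl card_biUnion_le)

lemma card_filter_powersetCard_subset_mul_factorial_le (s J : Finset β) (m : ℕ) {x : ℝ}
    (hx : 0 < x) (hJ : (#J : ℝ) ≤ x) :
    (#((J.powersetCard m).filter (s ⊆ ·)) : ℝ) * m ! ≤ m.descFactorial #s * (x ^ m / x ^ #s) := by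
  by_cases hs : s ⊆ J ∧ #s ≤ m
  · rw [card_filter_powersetCard_subset s J m hs.1 hs.2, ← Nat.factorial_mul_descFactorial hs.2,
      div_eq_mul_inv, ← pow_sub₀ x hx.ne' hs.2]
    have hchoose : ((#J - #s).choose (m - #s) : ℝ) * (m - #s)! ≤ x ^ (m - #s) := by
      refine (le_div_iff₀ (by positivity)).1 ((Nat.choose_le_pow_div _ _).trans ?_)
      gcongr
      exact (Nat.cast_le.2 (Nat.sub_le _ _)).trans hJ
    push_cast
    linarith [mul_le_mul_of_nonneg_left hchoose (Nat.cast_nonneg (α := ℝ) (m.descFactorial #s))]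
  · rw [card_eq_zero.2 (filter_eq_empty_iff.2 fun t ht hst => hs ?_)]
    · simp only [Nat.cast_zero, zero_mul]
      positivity
    · obtain ⟨htJ, htm⟩ := mem_powersetCard.1 ht
      exact ⟨hst.trans htJ, htm ▸ card_le_card hst⟩

end SubsetFamilies

section AdjacentEdges

variable {α : Type}

lemma edgesShare.symm {e f : Sym2 α} (h : edgesShare e f) : edgesShare f e :=
  let ⟨v, he, hf⟩ := h
  ⟨v, hf, he⟩

lemma edgesShare_self (e : Sym2 α) : edgesShare e e := by
  induction e with
  | _ a b => exact ⟨a, Sym2.mem_mk_left a b, Sym2.mem_mk_left a b⟩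

variable [DecidableEq α]

def adjacentPairs (E : Finset (Sym2 α)) : Finset (Finset (Sym2 α)) :=
  ((E ×ˢ E).filter fun ef => ef.1 ≠ ef.2 ∧ edgesShare ef.1 ef.2).image fun ef => {ef.1, ef.2}

lemma mem_adjacentPairs {E q : Finset (Sym2 α)} :
    q ∈ adjacentPairs E ↔ ∃ e ∈ E, ∃ f ∈ E, e ≠ f ∧ edgesShare e f ∧ {e, f} = q := by
  simp [adjacentPairs, and_assoc]

lemma card_eq_two_of_mem_adjacentPairs {E q : Finset (Sym2 α)} (hq : q ∈ adjacentPairs E) :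
    #q = 2 := by
  obtain ⟨e, -, f, -, hef, -, rfl⟩ := mem_adjacentPairs.1 hq
  exact card_pair hef

lemma subset_of_mem_adjacentPairs {E q : Finset (Sym2 α)} (hq : q ∈ adjacentPairs E) :
    q ⊆ E := by
  obtain ⟨e, he, f, hf, -, -, rfl⟩ := mem_adjacentPairs.1 hq
  exact insert_subset he (singleton_subset_iff.2 hf)

lemma card_adjacentPairs [Fintype α] (E : Finset (Sym2 α)) :
    #(adjacentPairs E) = ∑ v, (#(E.filter (v ∈ ·))).choose 2 := by
  have hU : adjacentPairs E = univ.biUnion fun v => (E.filter (v ∈ ·)).powersetCard 2 := by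
    ext q
    simp only [mem_adjacentPairs, mem_biUnion, mem_univ, true_and, mem_powersetCard, card_eq_two]
    constructor
    · rintro ⟨e, he, f, hf, hef, ⟨v, hve, hvf⟩, rfl⟩
      exact ⟨v, insert_subset (mem_filter.2 ⟨he, hve⟩)
        (singleton_subset_iff.2 (mem_filter.2 ⟨hf, hvf⟩)), e, f, hef, rfl⟩
    · rintro ⟨v, hsub, e, f, hef, rfl⟩
      have he := mem_filter.1 (hsub (mem_insert_self e {f}))
      have hf := mem_filter.1 (hsub (mem_insert_of_mem (mem_singleton_self f)))
      exact ⟨e, he.1, f, hf.1, hef, ⟨v, he.2, hf.2⟩, rfl⟩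
  rw [hU, card_biUnion]
  · simp_rw [card_powersetCard]
  · intro v _ w _ hvw
    refine disjoint_left.2 fun q hv hw => ?_
    obtain ⟨hqv, hq⟩ := mem_powersetCard.1 hv
    obtain ⟨e, f, hef, rfl⟩ := card_eq_two.1 hq
    have he := (Sym2.mem_and_mem_iff hvw).1
      ⟨(mem_filter.1 (hqv (mem_insert_self e {f}))).2,
        (mem_filter.1 ((mem_powersetCard.1 hw).1 (mem_insert_self e {f}))).2⟩
    have hf := (Sym2.mem_and_mem_iff hvw).1
      ⟨(mem_filter.1 (hqv (mem_insert_of_mem (mem_singleton_self f)))).2,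
        (mem_filter.1 ((mem_powersetCard.1 hw).1 (mem_insert_of_mem (mem_singleton_self f)))).2⟩
    exact hef (he.trans hf.symm)

lemma sum_card_filter_mem [Fintype α] (E : Finset (Sym2 α)) (hE : ∀ e ∈ E, ¬ e.IsDiag) :
    ∑ v, #(E.filter (v ∈ ·)) = 2 * #E := by
  simp_rw [card_filter]
  rw [sum_comm, mul_comm, ← smul_eq_mul, ← sum_const]
  refine sum_congr rfl fun e he => ?_
  rw [← card_filter, ← Sym2.card_toFinset_of_not_isDiag e (hE e he)]
  congr 1
  ext v
  simp [Sym2.mem_toFinset]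

def onePairSets (E : Finset (Sym2 α)) (k : ℕ) : Finset (Finset (Sym2 α)) :=
  (E.powersetCard k).filter fun s => ∃ e ∈ s, ∃ f ∈ s, e ≠ f ∧ edgesShare e f ∧
    ∀ e' ∈ s, ∀ f' ∈ s, e' ≠ f' → edgesShare e' f' → (e' = e ∧ f' = f) ∨ (e' = f ∧ f' = e)

lemma card_avoiding_add_card_onePairSets_le (E : Finset (Sym2 α)) (k : ℕ) :
    #(avoiding E k (adjacentPairs E)) + #(onePairSets E k) ≤ (#E).choose k := by
  rw [← card_union_of_disjoint, ← card_powersetCard]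
  · exact card_le_card (union_subset (filter_subset _ _) (filter_subset _ _))
  · refine disjoint_left.2 fun s hA hB => ?_
    obtain ⟨hs, e, he, f, hf, hef, hsh, -⟩ := mem_filter.1 hB
    have hsE := (mem_powersetCard.1 hs).1
    exact (mem_filter.1 hA).2 {e, f} (mem_adjacentPairs.2 ⟨e, hsE he, f, hsE hf, hef, hsh, rfl⟩)
      (insert_subset he (singleton_subset_iff.2 hf))

def adjacentEdges (E p : Finset (Sym2 α)) : Finset (Sym2 α) :=
  E.filter fun g => ∃ e ∈ p, edgesShare g e

lemma disjoint_of_subset_sdiff_adjacentEdges {E p t : Finset (Sym2 α)} (hp : p ⊆ E)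
    (ht : t ⊆ E \ adjacentEdges E p) : Disjoint p t :=
  disjoint_left.2 fun e hep het =>
    (mem_sdiff.1 (ht het)).2 (mem_filter.2 ⟨hp hep, e, hep, edgesShare_self e⟩)

lemma eq_of_mem_adjacentPairs_of_subset_union {E p t q : Finset (Sym2 α)} {m : ℕ}
    (hp : p ∈ adjacentPairs E) (ht : t ∈ avoiding (E \ adjacentEdges E p) m (adjacentPairs E))
    (hq : q ∈ adjacentPairs E) (hqs : q ⊆ p ∪ t) : q = p := by
  obtain ⟨⟨htE, -⟩, hpairs⟩ := mem_filter.1 ht |>.imp_left mem_powersetCard.1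
  have hfar : ∀ g ∈ t, ∀ e ∈ p, ¬ edgesShare g e := fun g hg e he hsh =>
    (mem_sdiff.1 (htE hg)).2 (mem_filter.2 ⟨(mem_sdiff.1 (htE hg)).1, e, he, hsh⟩)
  obtain ⟨a, -, b, -, hab, hsh, rfl⟩ := mem_adjacentPairs.1 hq
  have ha := mem_union.1 (hqs (mem_insert_self a {b}))
  have hb := mem_union.1 (hqs (mem_insert_of_mem (mem_singleton_self b)))
  rcases ha with ha | ha <;> rcases hb with hb | hb
  · exact eq_of_subset_of_card_le (insert_subset ha (singleton_subset_iff.2 hb))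
      (by rw [card_eq_two_of_mem_adjacentPairs hp, card_pair hab])
  · exact absurd hsh.symm (hfar b hb a ha)
  · exact absurd hsh (hfar a ha b hb)
  · exact absurd (insert_subset ha (singleton_subset_iff.2 hb)) (hpairs _ hq)

lemma union_mem_onePairSets {E p t : Finset (Sym2 α)} {k : ℕ} (hk : 2 ≤ k)
    (hp : p ∈ adjacentPairs E)
    (ht : t ∈ avoiding (E \ adjacentEdges E p) (k - 2) (adjacentPairs E)) :
    p ∪ t ∈ onePairSets E k := by
  have htE := (mem_powersetCard.1 (mem_filter.1 ht).1)
  have hpE := subset_of_mem_adjacentPairs hp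
  have hunion : p ∪ t ⊆ E := union_subset hpE (htE.1.trans sdiff_subset)
  obtain ⟨e, -, f, -, hef, hsh, rfl⟩ := mem_adjacentPairs.1 hp
  refine mem_filter.2 ⟨mem_powersetCard.2 ⟨hunion, ?_⟩, e, by simp, f, by simp, hef, hsh, ?_⟩
  · rw [card_union_of_disjoint (disjoint_of_subset_sdiff_adjacentEdges hpE htE.1), htE.2,
      card_pair hef]
    omega
  · intro e' he' f' hf' hne hsh'
    have hq := eq_of_mem_adjacentPairs_of_subset_union hp ht
      (mem_adjacentPairs.2 ⟨e', hunion he', f', hunion hf', hne, hsh', rfl⟩)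
      (insert_subset he' (singleton_subset_iff.2 hf'))
    have h1 : e' ∈ ({e, f} : Finset _) := hq ▸ mem_insert_self e' {f'}
    have h2 : f' ∈ ({e, f} : Finset _) := hq ▸ mem_insert_of_mem (mem_singleton_self f')
    simp only [mem_insert, mem_singleton] at h1 h2
    rcases h1 with rfl | rfl <;> rcases h2 with rfl | rfl <;> simp_all

-- The map `(p, t) ↦ p ∪ t` is injective.
lemma sum_card_avoiding_le_card_onePairSets (E : Finset (Sym2 α)) {k : ℕ} (hk : 2 ≤ k) :
    ∑ p ∈ adjacentPairs E, #(avoiding (E \ adjacentEdges E p) (k - 2) (adjacentPairs E)) ≤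
      #(onePairSets E k) := by
  rw [← card_sigma]
  refine card_le_card_of_injOn (fun pt => pt.1 ∪ pt.2) ?_ ?_
  · rintro ⟨p, t⟩ hpt
    obtain ⟨hp, ht⟩ := mem_sigma.1 hpt
    exact union_mem_onePairSets hk hp ht
  · rintro ⟨p, t⟩ hpt ⟨p', t'⟩ hpt' h
    simp only [coe_sigma, Set.mem_sigma_iff, mem_coe] at hpt hpt'
    have h : p ∪ t = p' ∪ t' := h
    obtain rfl : p' = p :=
      eq_of_mem_adjacentPairs_of_subset_union hpt.1 hpt.2 hpt'.1 (h ▸ subset_union_left)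
    have hdisj : ∀ {t}, t ∈ avoiding (E \ adjacentEdges E p') (k - 2) (adjacentPairs E) →
        Disjoint p' t := fun ht => disjoint_of_subset_sdiff_adjacentEdges
      (subset_of_mem_adjacentPairs hpt.1) (mem_powersetCard.1 (mem_filter.1 ht).1).1
    have htt : t = t' := by
      rw [← union_sdiff_cancel_left (hdisj hpt.2), h, union_sdiff_cancel_left (hdisj hpt'.2)]
    rw [htt]

end AdjacentEdges

section Estimates

variable {x : ℝ}

lemma pow_sub_sum_mul_le_prod_sub (hx : 0 < x) (a : ℕ → ℝ) (k : ℕ)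
    (ha : ∀ i < k, a i ∈ Set.Icc 0 x) :
    x ^ k - (∑ i ∈ range k, a i) * (x ^ k / x) ≤ ∏ i ∈ range k, (x - a i) := by
  induction k with
  | zero => simp
  | succ k ih =>
    obtain ⟨ha₀, hax⟩ := ha k (Nat.lt_succ_self k)
    have hS : 0 ≤ ∑ i ∈ range k, a i :=
      sum_nonneg fun i hi => (ha i ((mem_range.1 hi).trans (Nat.lt_succ_self k))).1
    have hy' : x ^ (k + 1) / x = x ^ k := by field_simp; ring
    rw [prod_range_succ, sum_range_succ, hy']
    refine le_trans ?_ (mul_le_mul_of_nonneg_right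
      (ih fun i hi => ha i (hi.trans (Nat.lt_succ_self k))) (sub_nonneg.2 hax))
    set S := ∑ i ∈ range k, a i
    have hy : x ^ k = x * (x ^ k / x) := by field_simp
    have hy₀ : 0 ≤ x ^ k / x := by positivity
    set y := x ^ k / x
    have h : (x ^ k - S * y) * (x - a k) = x ^ (k + 1) - (S + a k) * x ^ k + S * a k * y := by
      rw [pow_succ]; linear_combination S * hy
    linarith [mul_nonneg (mul_nonneg hS ha₀) hy₀]

lemma prod_sub_le (hx : 0 < x) (a : ℕ → ℝ) (k : ℕ) (ha : ∀ i < k, a i ∈ Set.Icc 0 x) :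
    ∏ i ∈ range k, (x - a i) ≤
      x ^ k - (∑ i ∈ range k, a i) * (x ^ k / x) + (∑ i ∈ range k, a i) ^ 2 * (x ^ k / x ^ 2) := by
  induction k with
  | zero => simp
  | succ k ih =>
    obtain ⟨ha₀, hax⟩ := ha k (Nat.lt_succ_self k)
    have hS : 0 ≤ ∑ i ∈ range k, a i :=
      sum_nonneg fun i hi => (ha i ((mem_range.1 hi).trans (Nat.lt_succ_self k))).1
    have hy' : x ^ (k + 1) / x = x ^ k := by field_simp; ring
    have hz' : x ^ (k + 1) / x ^ 2 = x ^ k / x := by field_simp; ring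
    rw [prod_range_succ, sum_range_succ, hy', hz']
    refine (mul_le_mul_of_nonneg_right (ih fun i hi => ha i (hi.trans (Nat.lt_succ_self k)))
      (sub_nonneg.2 hax)).trans ?_
    set S := ∑ i ∈ range k, a i
    have hy : x ^ k = x * (x ^ k / x) := by field_simp
    have hz : x ^ k / x = x * (x ^ k / x ^ 2) := by field_simp
    have hy₀ : 0 ≤ x ^ k / x := by positivity
    have hz₀ : 0 ≤ x ^ k / x ^ 2 := by positivity
    set y := x ^ k / x
    set z := x ^ k / x ^ 2
    have h : (x ^ k - S * y + S ^ 2 * z) * (x - a k) =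
        x ^ (k + 1) - (S + a k) * x ^ k + (S + a k) ^ 2 * y -
          ((a k * S + a k ^ 2) * y + a k * S ^ 2 * z) := by
      rw [pow_succ]; linear_combination S * hy - S ^ 2 * hz
    rw [h]
    have : 0 ≤ (a k * S + a k ^ 2) * y + a k * S ^ 2 * z := by positivity
    linarith

lemma natCast_mul_natCast_sub_one_nonneg (m : ℕ) : 0 ≤ (m : ℝ) * (m - 1) := by
  rw [← Nat.cast_descFactorial_two]
  positivity

lemma sum_range_natCast_add (c k : ℕ) :
    ∑ i ∈ range k, ((c : ℝ) + i) = c * k + k * (k - 1) / 2 := by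
  induction k with
  | zero => simp
  | succ k ih => rw [sum_range_succ, ih]; push_cast; ring

lemma factorial_mul_choose_sub_eq_prod (c k n : ℕ) (h : c + k ≤ n) :
    (k ! : ℝ) * (n - c).choose k = ∏ i ∈ range k, ((n : ℝ) - (c + i)) := by
  rw [← Nat.cast_mul, ← Nat.descFactorial_eq_factorial_mul_choose,
    Nat.descFactorial_eq_prod_range, Nat.cast_prod]
  refine prod_congr rfl fun i hi => ?_
  have : c + i ≤ n := by have := mem_range.1 hi; omega
  rw [Nat.sub_sub, Nat.cast_sub this]
  push_cast
  ring

lemma natCast_add_mem_Icc (c k n : ℕ) (h : c + k ≤ n) :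
    ∀ i < k, (c : ℝ) + i ∈ Set.Icc 0 (n : ℝ) := fun i hi =>
  ⟨by positivity, by exact_mod_cast (show c + i ≤ n by omega)⟩

/-- The bound is trivial when `n < c + k`, since then `n ≤ c k + k (k - 1) / 2`. -/
lemma pow_sub_le_factorial_mul_choose_sub (c k n : ℕ) (hn : 0 < n) :
    (n : ℝ) ^ k - (c * k + k * (k - 1) / 2) * ((n : ℝ) ^ k / n) ≤ k ! * (n - c).choose k := by
  have hx : (0 : ℝ) < n := by exact_mod_cast hn
  by_cases h : c + k ≤ n
  · rw [factorial_mul_choose_sub_eq_prod c k n h, ← sum_range_natCast_add]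
    exact pow_sub_sum_mul_le_prod_sub hx _ k (natCast_add_mem_Icc c k n h)
  · rcases Nat.eq_zero_or_pos k with rfl | hk
    · simp
    rw [Nat.choose_eq_zero_of_lt (by omega), Nat.cast_zero, mul_zero]
    have hnk : (n : ℝ) + 1 ≤ c + k := by exact_mod_cast (show n + 1 ≤ c + k by omega)
    have hk₁ : (1 : ℝ) ≤ k := by exact_mod_cast hk
    have hkk := natCast_mul_natCast_sub_one_nonneg (k - 1)
    push_cast [Nat.cast_sub hk] at hkk
    have hnS : (n : ℝ) ≤ c * k + k * (k - 1) / 2 := by nlinarith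
    have hy : (n : ℝ) ^ k = n * ((n : ℝ) ^ k / n) := by field_simp
    have hy₀ : 0 ≤ (n : ℝ) ^ k / n := by positivity
    set y := (n : ℝ) ^ k / n
    rw [hy]
    linarith [mul_le_mul_of_nonneg_right hnS hy₀]

lemma factorial_mul_choose_sub_le (c k n : ℕ) (hn : 0 < n) :
    (k ! : ℝ) * (n - c).choose k ≤ (n : ℝ) ^ k - (c * k + k * (k - 1) / 2) * ((n : ℝ) ^ k / n) +
      (c * k + k * (k - 1) / 2) ^ 2 * ((n : ℝ) ^ k / n ^ 2) := by
  have hx : (0 : ℝ) < n := by exact_mod_cast hn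
  by_cases h : c + k ≤ n
  · rw [factorial_mul_choose_sub_eq_prod c k n h, ← sum_range_natCast_add]
    exact prod_sub_le hx _ k (natCast_add_mem_Icc c k n h)
  · rcases Nat.eq_zero_or_pos k with rfl | hk
    · simp
    rw [Nat.choose_eq_zero_of_lt (by omega), Nat.cast_zero, mul_zero]
    have hS : (0 : ℝ) ≤ c * k + k * (k - 1) / 2 := by
      have := natCast_mul_natCast_sub_one_nonneg k
      positivity
    set S : ℝ := c * k + k * (k - 1) / 2
    have hy : (n : ℝ) ^ k = n * ((n : ℝ) ^ k / n) := by field_simp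
    have hz : (n : ℝ) ^ k / n = n * ((n : ℝ) ^ k / n ^ 2) := by field_simp
    have hz₀ : 0 ≤ (n : ℝ) ^ k / n ^ 2 := by positivity
    set y := (n : ℝ) ^ k / n
    set z := (n : ℝ) ^ k / n ^ 2
    rw [hy, hz]
    linarith [mul_nonneg hz₀ (sq_nonneg ((n : ℝ) - S)), mul_nonneg hz₀ (mul_nonneg hx.le hS)]

lemma cast_factorial_eq_of_two_le {k : ℕ} (hk : 2 ≤ k) :
    (k ! : ℝ) = k * (k - 1) * (k - 2)! := by
  obtain ⟨m, rfl⟩ : ∃ m, k = m + 2 := ⟨k - 2, by omega⟩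
  push_cast [Nat.factorial_succ, Nat.add_sub_cancel]
  ring

end Estimates

section Tree

variable {n : ℕ} {G : SimpleGraph (V n)}

lemma ubGraph.degree_inl (hG : ubGraph n G) (i : Fin n) : G.degree (Sum.inl i) = 1 := by
  rw [← G.card_neighborSet_eq_degree, ← Nat.card_eq_fintype_card, Nat.card_coe_set_eq,
    hG.2.2.1 i]

lemma ubGraph.degree_inr (hG : ubGraph n G) (j : Fin (n - 2)) : G.degree (Sum.inr j) = 3 := by
  rw [← G.card_neighborSet_eq_degree, ← Nat.card_eq_fintype_card, Nat.card_coe_set_eq,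
    hG.2.2.2 j]

lemma ubGraph.degree_of_isInternalV (hG : ubGraph n G) {v : V n} (hv : isInternalV v) :
    G.degree v = 3 := by
  obtain ⟨j, rfl⟩ := hv
  exact hG.degree_inr j

/-- Two adjacent leaves would form a whole connected component, leaving no room for the
internal vertex `inr 0`. -/
lemma ubGraph.not_adj_inl_inl (hn : 3 ≤ n) (hG : ubGraph n G) (i j : Fin n) :
    ¬ G.Adj (Sum.inl i) (Sum.inl j) := by
  intro hij
  have honly : ∀ {a b w}, G.Adj (Sum.inl a) (Sum.inl b) → G.Adj (Sum.inl a) w → w = Sum.inl b :=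
    fun {a b w} hab haw => by
      obtain ⟨u, hu⟩ := Set.ncard_eq_one.1 (hG.2.2.1 a)
      have hb : Sum.inl b ∈ G.neighborSet (Sum.inl a) := hab
      have hw : w ∈ G.neighborSet (Sum.inl a) := haw
      rw [hu, Set.mem_singleton_iff] at hb hw
      exact hw.trans hb.symm
  have hclosed : ∀ v, Relation.ReflTransGen G.Adj (Sum.inl i) v →
      v = Sum.inl i ∨ v = Sum.inl j := by
    intro v h
    induction h with
    | refl => exact Or.inl rfl
    | tail _ hadj ih =>
      rcases ih with rfl | rfl
      · exact Or.inr (honly hij hadj)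
      · exact Or.inl (honly hij.symm hadj)
  have hreach := (G.reachable_iff_reflTransGen _ _).1
    (hG.1.preconnected (Sum.inl i) (Sum.inr ⟨0, by omega⟩))
  rcases hclosed _ hreach with h | h <;> cases h

def internalEdges (G : SimpleGraph (V n)) : Finset (Sym2 (V n)) := univ.filter (internalEdge G)

lemma mem_internalEdges {e : Sym2 (V n)} : e ∈ internalEdges G ↔ internalEdge G e := by
  simp [internalEdges]

lemma isInternalV_iff {v : V n} : isInternalV v ↔ ∀ i, v ≠ Sum.inl i := by
  cases v <;> simp [isInternalV]

lemma card_internalEdges (hn : 3 ≤ n) (hG : ubGraph n G) : #(internalEdges G) = n - 3 := by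
  set L := univ.biUnion fun i : Fin n => G.incidenceFinset (Sum.inl i)
  have hL : #L = n := by
    rw [card_biUnion]
    · simp [G.card_incidenceFinset_eq_degree, hG.degree_inl]
    · intro i _ j _ hij
      refine disjoint_left.2 fun e hi hj => hG.not_adj_inl_inl hn i j ?_
      exact G.adj_of_mem_incidenceSet (by simpa using hij) ((G.mem_incidenceFinset _ _).1 hi)
        ((G.mem_incidenceFinset _ _).1 hj)
  have hLE : L ⊆ G.edgeFinset := biUnion_subset.2 fun i _ => G.incidenceFinset_subset _
  have hIE : internalEdges G = G.edgeFinset \ L := by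
    ext e
    simp only [mem_internalEdges, internalEdge, isInternalV_iff, mem_sdiff, mem_edgeFinset, L,
      mem_biUnion, mem_univ, true_and, mem_incidenceFinset, incidenceSet, Set.mem_ofPred_eq,
      not_exists, not_and]
    exact and_congr_right fun he => ⟨fun h i _ hi => h _ hi i rfl,
      fun h v hv i hvi => h i he (hvi ▸ hv)⟩
  have htree := (show G.IsTree from ⟨hG.1, hG.2.1⟩).card_edgeFinset
  rw [Fintype.card_sum, Fintype.card_fin, Fintype.card_fin] at htree
  rw [hIE, card_sdiff_of_subset hLE, hL]
  omega

def internalDegree (G : SimpleGraph (V n)) (v : V n) : ℕ := #((internalEdges G).filter (v ∈ ·))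

lemma internalDegree_inl (i : Fin n) : internalDegree G (Sum.inl i) = 0 := by
  refine card_eq_zero.2 (filter_eq_empty_iff.2 fun e he hi => ?_)
  exact isInternalV_iff.1 ((mem_internalEdges.1 he).2 _ hi) i rfl

lemma internalDegree_le (hG : ubGraph n G) (j : Fin (n - 2)) :
    internalDegree G (Sum.inr j) ≤ 3 := by
  refine (card_le_card fun e he => ?_).trans (G.card_incidenceFinset_eq_degree _ ▸
    (hG.degree_inr j).le)
  obtain ⟨he, hj⟩ := mem_filter.1 he
  exact (G.mem_incidenceFinset _ _).2 ⟨(mem_internalEdges.1 he).1, hj⟩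

lemma sum_internalDegree (hn : 3 ≤ n) (hG : ubGraph n G) :
    ∑ j, internalDegree G (Sum.inr j) = 2 * (n - 3) := by
  have h : ∑ v, internalDegree G v = 2 * #(internalEdges G) := sum_card_filter_mem _
    fun e he => G.not_isDiag_of_mem_edgeSet (mem_internalEdges.1 he).1
  simpa [Fintype.sum_sum_type, internalDegree_inl, card_internalEdges hn hG] using h

lemma card_adjacentPairs_internalEdges :
    #(adjacentPairs (internalEdges G)) = ∑ j, (internalDegree G (Sum.inr j)).choose 2 := by
  have h : #(adjacentPairs (internalEdges G)) = ∑ v, (internalDegree G v).choose 2 :=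
    card_adjacentPairs _
  simp [h, Fintype.sum_sum_type, internalDegree_inl]

lemma card_adjacentPairs_internalEdges_le (hn : 3 ≤ n) (hG : ubGraph n G) :
    #(adjacentPairs (internalEdges G)) ≤ 2 * (n - 3) := by
  rw [card_adjacentPairs_internalEdges, ← sum_internalDegree hn hG]
  refine sum_le_sum fun j _ => ?_
  have := internalDegree_le hG j
  interval_cases internalDegree G (Sum.inr j) <;> decide

/-- Each internal vertex contributes `C(d, 2) ≥ 2d - 3` adjacent pairs. -/
lemma le_card_adjacentPairs_internalEdges (hn : 3 ≤ n) (hG : ubGraph n G) :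
    n ≤ #(adjacentPairs (internalEdges G)) + 6 := by
  have h : ∑ j, 2 * internalDegree G (Sum.inr j) ≤
      ∑ j : Fin (n - 2), ((internalDegree G (Sum.inr j)).choose 2 + 3) := by
    refine sum_le_sum fun j _ => ?_
    have := internalDegree_le hG j
    interval_cases internalDegree G (Sum.inr j) <;> decide
  rw [← mul_sum, sum_internalDegree hn hG, sum_add_distrib, ← card_adjacentPairs_internalEdges] at h
  simp only [sum_const, card_univ, Fintype.card_fin, smul_eq_mul] at h
  omega

lemma card_filter_edgesShare_le (hG : ubGraph n G) {e : Sym2 (V n)}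
    (he : e ∈ internalEdges G) : #((internalEdges G).filter (edgesShare · e)) ≤ 6 := by
  induction e with
  | _ a b =>
    obtain ⟨-, hint⟩ := mem_internalEdges.1 he
    calc #((internalEdges G).filter (edgesShare · s(a, b)))
        ≤ #(G.incidenceFinset a ∪ G.incidenceFinset b) := by
          refine card_le_card fun g hg => ?_
          obtain ⟨hg, v, hvg, hv⟩ := mem_filter.1 hg
          have hgE := (mem_internalEdges.1 hg).1
          rcases Sym2.mem_iff.1 hv with rfl | rfl
          · exact mem_union_left _ ((G.mem_incidenceFinset _ _).2 ⟨hgE, hvg⟩)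
          · exact mem_union_right _ ((G.mem_incidenceFinset _ _).2 ⟨hgE, hvg⟩)
      _ ≤ 6 := by
          refine (card_union_le _ _).trans ?_
          rw [G.card_incidenceFinset_eq_degree, G.card_incidenceFinset_eq_degree,
            hG.degree_of_isInternalV (hint a (Sym2.mem_mk_left a b)),
            hG.degree_of_isInternalV (hint b (Sym2.mem_mk_right a b))]

lemma card_adjacentEdges_le (hG : ubGraph n G) {p : Finset (Sym2 (V n))}
    (hp : p ∈ adjacentPairs (internalEdges G)) :
    #(adjacentEdges (internalEdges G) p) ≤ 12 := by
  have hsub : adjacentEdges (internalEdges G) p ⊆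
      p.biUnion fun e => (internalEdges G).filter (edgesShare · e) := fun g hg => by
    obtain ⟨hg, e, he, hsh⟩ := mem_filter.1 hg
    exact mem_biUnion.2 ⟨e, he, mem_filter.2 ⟨hg, hsh⟩⟩
  calc #(adjacentEdges (internalEdges G) p)
      ≤ ∑ e ∈ p, #((internalEdges G).filter (edgesShare · e)) :=
        (card_le_card hsub).trans card_biUnion_le
    _ ≤ ∑ _e ∈ p, 6 := sum_le_sum fun e he =>
        card_filter_edgesShare_le hG (subset_of_mem_adjacentPairs hp he)
    _ = 12 := by rw [sum_const, card_eq_two_of_mem_adjacentPairs hp, smul_eq_mul]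

lemma Aset_eq_avoiding (k : ℕ) :
    Aset n k G = ↑(avoiding (internalEdges G) k (adjacentPairs (internalEdges G))) := by
  ext s
  simp only [Aset, avoiding, coe_filter, mem_powersetCard, Set.mem_ofPred_eq]
  constructor
  · rintro ⟨hk, hint, hsh⟩
    refine ⟨⟨fun e he => mem_internalEdges.2 (hint e he), hk⟩, fun q hq hqs => ?_⟩
    obtain ⟨e, -, f, -, hef, h, rfl⟩ := mem_adjacentPairs.1 hq
    exact hsh e (hqs (mem_insert_self e {f})) f (hqs (mem_insert_of_mem (mem_singleton_self f)))
      hef h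
  · rintro ⟨⟨hint, hk⟩, hq⟩
    refine ⟨hk, fun e he => mem_internalEdges.1 (hint he), fun e he f hf hef h => hq {e, f}
      (mem_adjacentPairs.2 ⟨e, hint he, f, hint hf, hef, h, rfl⟩)
      (insert_subset he (singleton_subset_iff.2 hf))⟩

lemma Bset_eq_onePairSets (k : ℕ) :
    Bset n k G = ↑(onePairSets (internalEdges G) k) := by
  ext s
  simp only [Bset, onePairSets, coe_filter, mem_powersetCard, Set.mem_ofPred_eq]
  constructor
  · rintro ⟨hk, hint, h⟩
    exact ⟨⟨fun e he => mem_internalEdges.2 (hint e he), hk⟩, h⟩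
  · rintro ⟨⟨hint, hk⟩, h⟩
    exact ⟨hk, fun e he => mem_internalEdges.1 (hint he), h⟩

lemma sum_card_superset_mul_factorial_le (hn : 3 ≤ n) (hG : ubGraph n G)
    {J : Finset (Sym2 (V n))} (hJ : #J ≤ n) (m : ℕ) :
    (∑ q ∈ adjacentPairs (internalEdges G), #((J.powersetCard m).filter (q ⊆ ·)) : ℝ) * m ! ≤
      2 * m.descFactorial 2 * ((n : ℝ) ^ m / n) := by
  have hx : (0 : ℝ) < n := by exact_mod_cast (show 0 < n by omega)
  have hP : (#(adjacentPairs (internalEdges G)) : ℝ) ≤ 2 * n := by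
    have := card_adjacentPairs_internalEdges_le hn hG
    exact_mod_cast (show #(adjacentPairs (internalEdges G)) ≤ 2 * n by omega)
  have hterm : ∀ q ∈ adjacentPairs (internalEdges G),
      (#((J.powersetCard m).filter (q ⊆ ·)) : ℝ) * m ! ≤
        m.descFactorial 2 * ((n : ℝ) ^ m / n ^ 2) :=
    fun q hq => by
      have h := card_filter_powersetCard_subset_mul_factorial_le q J m hx (by exact_mod_cast hJ)
      rwa [card_eq_two_of_mem_adjacentPairs hq] at h
  calc (∑ q ∈ adjacentPairs (internalEdges G), #((J.powersetCard m).filter (q ⊆ ·)) : ℝ) * m !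
      ≤ #(adjacentPairs (internalEdges G)) * (m.descFactorial 2 * ((n : ℝ) ^ m / n ^ 2)) := by
        rw [sum_mul, ← nsmul_eq_mul, ← sum_const]
        exact sum_le_sum hterm
    _ ≤ 2 * n * (m.descFactorial 2 * ((n : ℝ) ^ m / n ^ 2)) := by gcongr
    _ = 2 * m.descFactorial 2 * ((n : ℝ) ^ m / n) := by field_simp

lemma ncard_Aset_ge (hn : 3 ≤ n) (hG : ubGraph n G) (k : ℕ) :
    1 / (k ! : ℝ) * (n : ℝ) ^ k - (k * (5 * k + 1)) / (2 * k !) * ((n : ℝ) ^ k / n) ≤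
      (Aset n k G).ncard := by
  have hunion := choose_card_le_card_avoiding_add_sum (internalEdges G) k
    (adjacentPairs (internalEdges G))
  rw [card_internalEdges hn hG] at hunion
  have hchoose := pow_sub_le_factorial_mul_choose_sub 3 k n (by omega)
  have hsum := sum_card_superset_mul_factorial_le hn hG (J := internalEdges G)
    (by rw [card_internalEdges hn hG]; omega) k
  rw [Aset_eq_avoiding, Set.ncard_coe_finset]
  have hk : (0 : ℝ) < k ! := by positivity
  rw [Nat.cast_descFactorial_two] at hsum
  have key : (n : ℝ) ^ k - k * (5 * k + 1) / 2 * ((n : ℝ) ^ k / n) ≤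
      k ! * #(avoiding (internalEdges G) k (adjacentPairs (internalEdges G))) := by
    have h := mul_le_mul_of_nonneg_left (α := ℝ) (Nat.cast_le.2 hunion) hk.le
    push_cast at h hchoose
    linarith
  have hform : 1 / (k ! : ℝ) * (n : ℝ) ^ k - (k * (5 * k + 1)) / (2 * k !) * ((n : ℝ) ^ k / n) =
      ((n : ℝ) ^ k - k * (5 * k + 1) / 2 * ((n : ℝ) ^ k / n)) / (k ! : ℝ) := by
    field_simp
  rw [hform, div_le_iff₀ hk]
  linarith

lemma ncard_Bset_le (hn : 3 ≤ n) (hG : ubGraph n G) {k : ℕ} (hk : 2 ≤ k) :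
    ((Bset n k G).ncard : ℝ) ≤ 2 / ((k - 2)! : ℝ) * ((n : ℝ) ^ k / n) := by
  have hunion := choose_card_le_card_avoiding_add_sum (internalEdges G) k
    (adjacentPairs (internalEdges G))
  have hdisj := card_avoiding_add_card_onePairSets_le (internalEdges G) k
  have hsum := sum_card_superset_mul_factorial_le hn hG (J := internalEdges G)
    (by rw [card_internalEdges hn hG]; omega) k
  rw [Bset_eq_onePairSets, Set.ncard_coe_finset]
  have hB := mul_le_mul_of_nonneg_right (Nat.cast_le (α := ℝ).2 (show #(onePairSets
    (internalEdges G) k) ≤ ∑ q ∈ adjacentPairs (internalEdges G),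
      #(((internalEdges G).powersetCard k).filter (q ⊆ ·)) by omega)) (k !).cast_nonneg
  obtain ⟨m, rfl⟩ : ∃ m, k = m + 2 := ⟨k - 2, by omega⟩
  rw [Nat.add_sub_cancel, div_mul_eq_mul_div, le_div_iff₀ (by positivity)]
  rw [Nat.cast_descFactorial_two] at hsum
  push_cast at hB hsum
  have hfac : ((m + 2)! : ℝ) = (m + 2) * (m + 1) * m ! := by
    push_cast [Nat.factorial_succ]; ring
  rw [hfac] at hB hsum
  refine le_of_mul_le_mul_right ?_ (by positivity : (0 : ℝ) < (m + 2) * (m + 1))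
  linarith

-- `n - 15 = (n - 3) - 12`, as at most `12` internal edges meet `p`.
lemma factorial_mul_choose_le_card_avoiding (hn : 3 ≤ n) (hG : ubGraph n G)
    {p : Finset (Sym2 (V n))} (hp : p ∈ adjacentPairs (internalEdges G)) (m : ℕ) :
    (m ! : ℝ) * (n - 15).choose m ≤
      m ! * #(avoiding (internalEdges G \ adjacentEdges (internalEdges G) p) m
        (adjacentPairs (internalEdges G))) + 2 * m.descFactorial 2 * ((n : ℝ) ^ m / n) := by
  have hE := card_internalEdges hn hG
  have hJ := le_card_sdiff (adjacentEdges (internalEdges G) p) (internalEdges G)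
  have hJn := card_le_card (sdiff_subset : internalEdges G \ adjacentEdges (internalEdges G) p ⊆
    internalEdges G)
  have := card_adjacentEdges_le hG hp
  generalize internalEdges G \ adjacentEdges (internalEdges G) p = J at hJ hJn ⊢
  replace hJ : n - 15 ≤ #J := by omega
  replace hJn : #J ≤ n := by omega
  have hunion := (Nat.choose_le_choose m hJ).trans
    (choose_card_le_card_avoiding_add_sum J m (adjacentPairs (internalEdges G)))
  have hsum := sum_card_superset_mul_factorial_le hn hG hJn m
  have h := mul_le_mul_of_nonneg_left (α := ℝ) (Nat.cast_le.2 hunion) (m !).cast_nonneg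
  push_cast at h hsum ⊢
  linarith

lemma pow_succ_sub_le_factorial_mul_card_onePairSets (hn : 3 ≤ n) (hG : ubGraph n G) (m : ℕ) :
    (n : ℝ) ^ (m + 1) - (15 * m + m * (m - 1) / 2 + 6 + 4 * m.descFactorial 2) * (n : ℝ) ^ m ≤
      m ! * #(onePairSets (internalEdges G) (m + 2)) := by
  have hx : (0 : ℝ) < n := by exact_mod_cast (show 0 < n by omega)
  have hP₁ := le_card_adjacentPairs_internalEdges hn hG
  have hP₂ := card_adjacentPairs_internalEdges_le hn hG
  have hClow := pow_sub_le_factorial_mul_choose_sub 15 m n (by omega)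
  have hCup := Nat.choose_le_pow_div (α := ℝ) m (n - 15)
  rw [le_div_iff₀ (by positivity)] at hCup
  push_cast at hClow
  set P := adjacentPairs (internalEdges G)
  set C : ℝ := m ! * (n - 15).choose m
  set E : ℝ := 2 * m.descFactorial 2 * ((n : ℝ) ^ m / n)
  have hPlow : (n : ℝ) - 6 ≤ #P := by
    have : (n : ℝ) ≤ #P + 6 := by exact_mod_cast hP₁
    linarith
  have hsum : #P * C ≤ m ! * #(onePairSets (internalEdges G) (m + 2)) + #P * E :=
    calc #P * C = ∑ _p ∈ P, C := by rw [sum_const, nsmul_eq_mul]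
      _ ≤ ∑ p ∈ P, (m ! * #(avoiding (internalEdges G \ adjacentEdges (internalEdges G) p) m P)
            + E) := sum_le_sum fun p hp => factorial_mul_choose_le_card_avoiding hn hG hp m
      _ = m ! * ∑ p ∈ P, #(avoiding (internalEdges G \ adjacentEdges (internalEdges G) p) m P)
            + #P * E := by
          rw [sum_add_distrib, ← mul_sum, sum_const, nsmul_eq_mul, Nat.cast_sum]
      _ ≤ m ! * #(onePairSets (internalEdges G) (m + 2)) + #P * E := by
          gcongr
          exact_mod_cast sum_card_avoiding_le_card_onePairSets _ (Nat.le_add_left 2 m)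
  have hC : C ≤ (n : ℝ) ^ m :=
    calc C = (n - 15).choose m * m ! := mul_comm _ _
      _ ≤ ((n - 15 : ℕ) : ℝ) ^ m := hCup
      _ ≤ (n : ℝ) ^ m := by gcongr; exact_mod_cast Nat.sub_le n 15
  have hE : #P * E ≤ 4 * m.descFactorial 2 * (n : ℝ) ^ m := by
    calc #P * E ≤ 2 * n * E := by gcongr; exact_mod_cast (show #P ≤ 2 * n by omega)
      _ = 4 * m.descFactorial 2 * (n : ℝ) ^ m := by simp only [E]; field_simp; ring
  have hxC : (n : ℝ) ^ (m + 1) - (15 * m + m * (m - 1) / 2) * (n : ℝ) ^ m ≤ n * C :=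
    calc (n : ℝ) ^ (m + 1) - (15 * m + m * (m - 1) / 2) * (n : ℝ) ^ m
        = n * ((n : ℝ) ^ m - (15 * m + m * (m - 1) / 2) * ((n : ℝ) ^ m / n)) := by
          rw [pow_succ]; field_simp
      _ ≤ n * C := mul_le_mul_of_nonneg_left hClow hx.le
  linarith [mul_le_mul_of_nonneg_right hPlow (by positivity : 0 ≤ C)]

lemma exists_ncard_Bset_ge (k : ℕ) : ∃ K : ℝ, 0 ≤ K ∧ ∀ n, 3 ≤ n → ∀ G : SimpleGraph (V n),
    ubGraph n G → 2 ≤ k →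
      1 / ((k - 2)! : ℝ) * ((n : ℝ) ^ k / n) - K * ((n : ℝ) ^ k / n ^ 2) ≤ (Bset n k G).ncard := by
  rcases lt_or_ge k 2 with hk | hk
  · exact ⟨0, le_rfl, fun n _ G _ hk' => absurd hk' (by omega)⟩
  obtain ⟨m, rfl⟩ : ∃ m, k = m + 2 := ⟨k - 2, by omega⟩
  set K : ℝ := 15 * m + m * (m - 1) / 2 + 6 + 4 * m.descFactorial 2
  have hK₀ : 0 ≤ K := by
    have := natCast_mul_natCast_sub_one_nonneg m
    positivity
  refine ⟨K, hK₀, fun n hn G hG _ => ?_⟩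
  have hx : (0 : ℝ) < n := by exact_mod_cast (show 0 < n by omega)
  have h : (n : ℝ) ^ (m + 1) - K * (n : ℝ) ^ m ≤ m ! * #(onePairSets (internalEdges G) (m + 2)) :=
    pow_succ_sub_le_factorial_mul_card_onePairSets hn hG m
  rw [Nat.add_sub_cancel, Bset_eq_onePairSets, Set.ncard_coe_finset,
    show (n : ℝ) ^ (m + 2) / n = (n : ℝ) ^ (m + 1) by field_simp; ring,
    show (n : ℝ) ^ (m + 2) / n ^ 2 = (n : ℝ) ^ m by field_simp; ring]
  have hK : 0 ≤ K * (n : ℝ) ^ m := by positivity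
  have hm : (1 : ℝ) ≤ m ! := by exact_mod_cast m.factorial_pos
  calc 1 / (m ! : ℝ) * (n : ℝ) ^ (m + 1) - K * (n : ℝ) ^ m
      ≤ ((n : ℝ) ^ (m + 1) - K * (n : ℝ) ^ m) / m ! := by
        rw [sub_div, one_div_mul_eq_div]
        exact sub_le_sub_left (div_le_self hK hm) _
    _ ≤ #(onePairSets (internalEdges G) (m + 2)) := by
        rw [div_le_iff₀ (by positivity)]
        linarith

lemma exists_ncard_Aset_le (k : ℕ) : ∃ K : ℝ, ∀ n, 3 ≤ n → ∀ G : SimpleGraph (V n), ubGraph n G →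
    ((Aset n k G).ncard : ℝ) ≤
      1 / (k ! : ℝ) * (n : ℝ) ^ k - (k * (k + 2)) / k ! * ((n : ℝ) ^ k / n) +
        K * ((n : ℝ) ^ k / n ^ 2) := by
  obtain ⟨K, hK₀, hK⟩ := exists_ncard_Bset_ge k
  refine ⟨(3 * k + k * (k - 1) / 2) ^ 2 + K, fun n hn G hG => ?_⟩
  have hx : (0 : ℝ) < n := by exact_mod_cast (show 0 < n by omega)
  have hk : (1 : ℝ) ≤ k ! := by exact_mod_cast k.factorial_pos
  have hdisj := card_avoiding_add_card_onePairSets_le (internalEdges G) k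
  rw [card_internalEdges hn hG] at hdisj
  have hC := factorial_mul_choose_sub_le 3 k n (by omega)
  push_cast at hC
  have hkk := natCast_mul_natCast_sub_one_nonneg k
  have hy : 0 ≤ (n : ℝ) ^ k / n := by positivity
  have hz : 0 ≤ (n : ℝ) ^ k / n ^ 2 := by positivity
  have hB : k * (k - 1) * ((n : ℝ) ^ k / n) - k ! * K * ((n : ℝ) ^ k / n ^ 2) ≤
      k ! * #(onePairSets (internalEdges G) k) := by
    rw [← Set.ncard_coe_finset, ← Bset_eq_onePairSets]
    have hKz : 0 ≤ (k ! : ℝ) * K * ((n : ℝ) ^ k / n ^ 2) := by positivity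
    rcases lt_or_ge k 2 with hk2 | hk2
    · have : (k : ℝ) * (k - 1) = 0 := by interval_cases k <;> norm_num
      rw [this, zero_mul, zero_sub]
      exact (neg_nonpos.2 hKz).trans (by positivity)
    · have h := mul_le_mul_of_nonneg_left (hK n hn G hG hk2) (Nat.cast_nonneg (α := ℝ) k !)
      have e : (k ! : ℝ) * (1 / (k - 2)! * ((n : ℝ) ^ k / n) - K * ((n : ℝ) ^ k / n ^ 2)) =
          k * (k - 1) * ((n : ℝ) ^ k / n) - k ! * K * ((n : ℝ) ^ k / n ^ 2) := by
        rw [cast_factorial_eq_of_two_le hk2]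
        field_simp
      linarith
  have hkey : (k ! : ℝ) * #(avoiding (internalEdges G) k (adjacentPairs (internalEdges G))) ≤
      (n : ℝ) ^ k - (3 * k + k * (k - 1) / 2 + k * (k - 1)) * ((n : ℝ) ^ k / n) +
        ((3 * k + k * (k - 1) / 2) ^ 2 + k ! * K) * ((n : ℝ) ^ k / n ^ 2) := by
    have h : (k ! : ℝ) * (#(avoiding (internalEdges G) k (adjacentPairs (internalEdges G))) +
        #(onePairSets (internalEdges G) k)) ≤ k ! * (n - 3).choose k := by
      gcongr
      exact_mod_cast hdisj
    linarith
  rw [Aset_eq_avoiding, Set.ncard_coe_finset]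
  rw [show 1 / (k ! : ℝ) * (n : ℝ) ^ k - (k * (k + 2)) / k ! * ((n : ℝ) ^ k / n) +
      ((3 * k + k * (k - 1) / 2) ^ 2 + K) * ((n : ℝ) ^ k / n ^ 2) =
      ((n : ℝ) ^ k - k * (k + 2) * ((n : ℝ) ^ k / n) +
        k ! * ((3 * k + k * (k - 1) / 2) ^ 2 + K) * ((n : ℝ) ^ k / n ^ 2)) / (k ! : ℝ) by
      field_simp,
    le_div_iff₀ (by positivity), mul_comm]
  linarith [mul_nonneg hkk hy, mul_nonneg (mul_nonneg (sq_nonneg (3 * (k : ℝ) + k * (k - 1) / 2))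
    hz) (sub_nonneg.2 hk)]

end Tree

end Phylo

theorem edge_subset_counts_general (k : ℕ) :
    ∃ M : ℝ, 0 < M ∧ ∀ n : ℕ, 4 ≤ n → ∀ G : SimpleGraph (Phylo.V n), Phylo.ubGraph n G →
      (k ≤ n - 3 →
        (1 / (k.factorial : ℝ)) * (n : ℝ) ^ k -
            (((k : ℝ) * (5 * k + 1)) / (2 * k.factorial)) * (n : ℝ) ^ ((k : ℤ) - 1) -
            M * (n : ℝ) ^ ((k : ℤ) - 2) ≤ ((Phylo.Aset n k G).ncard : ℝ) ∧
        ((Phylo.Aset n k G).ncard : ℝ) ≤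
          (1 / (k.factorial : ℝ)) * (n : ℝ) ^ k -
            (((k : ℝ) * (k + 2)) / k.factorial) * (n : ℝ) ^ ((k : ℤ) - 1) +
            M * (n : ℝ) ^ ((k : ℤ) - 2)) ∧
      (2 ≤ k → k ≤ n - 3 →
        (1 / (2 * ((k - 2).factorial : ℝ))) * (n : ℝ) ^ ((k : ℤ) - 1) -
            M * (n : ℝ) ^ ((k : ℤ) - 2) ≤ ((Phylo.Bset n k G).ncard : ℝ) ∧
        ((Phylo.Bset n k G).ncard : ℝ) ≤
          (2 / ((k - 2).factorial : ℝ)) * (n : ℝ) ^ ((k : ℤ) - 1) +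
            M * (n : ℝ) ^ ((k : ℤ) - 2)) := by
  obtain ⟨K₁, hK₁⟩ := Phylo.exists_ncard_Aset_le k
  obtain ⟨K₂, -, hK₂⟩ := Phylo.exists_ncard_Bset_ge k
  refine ⟨max 1 (max K₁ K₂), by positivity, fun n hn G hG => ?_⟩
  have hx : (n : ℝ) ≠ 0 := by positivity
  have hz : 0 ≤ (n : ℝ) ^ k / n ^ 2 := by positivity
  have hM₁ := mul_le_mul_of_nonneg_right ((le_max_left K₁ K₂).trans (le_max_right 1 _)) hz
  have hM₂ := mul_le_mul_of_nonneg_right ((le_max_right K₁ K₂).trans (le_max_right 1 _)) hz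
  have hM₀ := mul_nonneg (zero_le_one.trans (le_max_left 1 (max K₁ K₂))) hz
  have hB : 1 / (2 * ((k - 2).factorial : ℝ)) * ((n : ℝ) ^ k / n) ≤
      1 / ((k - 2).factorial : ℝ) * ((n : ℝ) ^ k / n) := by
    gcongr
    linarith [(Nat.one_le_cast (α := ℝ)).2 (k - 2).factorial_pos]
  simp only [zpow_sub₀ hx, zpow_natCast, zpow_ofNat, pow_one]
  refine ⟨fun _ => ⟨?_, ?_⟩, fun hk _ => ⟨?_, Phylo.ncard_Bset_le (by omega) hG hk |>.trans ?_⟩⟩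
  · linarith [Phylo.ncard_Aset_ge (by omega) hG k]
  · linarith [hK₁ n (by omega) G hG]
  · linarith [hK₂ n (by omega) G hG hk]
  · linarith

/-- For each fixed `k` there is a constant `M_k > 0` such that for all `T ∈ UB(n)` with
`n ≥ 4`: (i) for `1 ≤ k ≤ n−3` the number `A_{T,k}` of sets of `k` distinct pairwise
non-adjacent internal edges satisfies
`n^k/k! − (k(5k+1)/(2k!))n^{k−1} − M_k n^{k−2} ≤ A_{T,k} ≤ n^k/k! − (k(k+2)/k!)n^{k−1} + M_k n^{k−2}`;
(ii) for `2 ≤ k ≤ n−3` the number `B_{T,k}` of sets of `k` distinct internal edges with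
exactly two adjacent satisfies
`n^{k−1}/(2(k−2)!) − M_k n^{k−2} ≤ B_{T,k} ≤ (2/(k−2)!)n^{k−1} + M_k n^{k−2}`. -/
theorem edge_subset_counts (k : ℕ) (hk : 1 ≤ k) :
    ∃ M : ℝ, 0 < M ∧ ∀ n : ℕ, 4 ≤ n → ∀ G : SimpleGraph (Phylo.V n), Phylo.ubGraph n G →
      (k ≤ n - 3 →
        (1 / (k.factorial : ℝ)) * (n : ℝ) ^ k -
            (((k : ℝ) * (5 * k + 1)) / (2 * k.factorial)) * (n : ℝ) ^ ((k : ℤ) - 1) -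
            M * (n : ℝ) ^ ((k : ℤ) - 2) ≤ ((Phylo.Aset n k G).ncard : ℝ) ∧
        ((Phylo.Aset n k G).ncard : ℝ) ≤
          (1 / (k.factorial : ℝ)) * (n : ℝ) ^ k -
            (((k : ℝ) * (k + 2)) / k.factorial) * (n : ℝ) ^ ((k : ℤ) - 1) +
            M * (n : ℝ) ^ ((k : ℤ) - 2)) ∧
      (2 ≤ k → k ≤ n - 3 →
        (1 / (2 * ((k - 2).factorial : ℝ))) * (n : ℝ) ^ ((k : ℤ) - 1) -
            M * (n : ℝ) ^ ((k : ℤ) - 2) ≤ ((Phylo.Bset n k G).ncard : ℝ) ∧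
        ((Phylo.Bset n k G).ncard : ℝ) ≤
          (2 / ((k - 2).factorial : ℝ)) * (n : ℝ) ^ ((k : ℤ) - 1) +
            M * (n : ℝ) ^ ((k : ℤ) - 2)) :=
  edge_subset_counts_general k
end
end
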